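/- arXiv:2403.00480 — 2 statements merged into one kernel-verified Lean document; each statement's English description precedes it below -/
import Mathlib

section
/- Let K : ℍ × ℍ → [0,∞) satisfy K(x,y) = K(ax, ay) = K(x + (z̃,0), y + (z̃,0)) for all x, y ∈ ℍ, all a > 0 and all z̃ ∈ ℝ^{d−1}. Define F_K : ℍ₋₁ → [0,∞) by F_K(z) := K(e_d, e_d + z). Then: (i) K(x,y) = F_K((y − x)/x_d) for all x, y ∈ ℍ; (ii) if in addition K(x,y) = K(y,x) for all x, y ∈ ℍ, then F_K(z) = F_K(−z/(1+z_d)) for all z ∈ ℍ₋₁. -/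
open MeasureTheory Metric Set Filter
open scoped ENNReal NNReal Topology

noncomputable section

/-- The first `n` coordinates of a point of `ℝ^(n+1)`. -/
def tilde {n : ℕ} (x : EuclideanSpace ℝ (Fin (n + 1))) : EuclideanSpace ℝ (Fin n) :=
  WithLp.toLp 2 (fun i : Fin n => x i.castSucc)

/-- The last ("vertical") coordinate of a point of `ℝ^(n+1)`. -/
def vert {n : ℕ} (x : EuclideanSpace ℝ (Fin (n + 1))) : ℝ := x (Fin.last n)

/-- The point `(z, t) ∈ ℝ^(n+1)`. -/
def emb {n : ℕ} (z : EuclideanSpace ℝ (Fin n)) (t : ℝ) : EuclideanSpace ℝ (Fin (n + 1)) :=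
  WithLp.toLp 2 (Fin.snoc (α := fun _ => ℝ) (WithLp.ofLp z) t)

/-- The open upper half-space `ℍ`. -/
def Hup (n : ℕ) : Set (EuclideanSpace ℝ (Fin (n + 1))) := {x | 0 < vert x}

/-- The half-space `ℍ₋₁ = {x : x_d > -1}`. -/
def Hm1 (n : ℕ) : Set (EuclideanSpace ℝ (Fin (n + 1))) := {x | -1 < vert x}

lemma vert_add {n : ℕ} (x y : EuclideanSpace ℝ (Fin (n + 1))) :
    vert (x + y) = vert x + vert y := rfl

lemma vert_smul {n : ℕ} (a : ℝ) (x : EuclideanSpace ℝ (Fin (n + 1))) :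
    vert (a • x) = a * vert x := rfl

lemma vert_emb {n : ℕ} (z : EuclideanSpace ℝ (Fin n)) (t : ℝ) : vert (emb z t) = t := by
  simp [vert, emb]

lemma eq_emb {n : ℕ} (v : EuclideanSpace ℝ (Fin (n + 1))) : v = emb (tilde v) (vert v) := by
  ext i
  refine Fin.lastCases ?_ (fun j => ?_) i
  · simp [emb, vert]
  · simp [emb, tilde]

theorem stmt_7 {n : ℕ} (hn : 1 ≤ n)
    (K : EuclideanSpace ℝ (Fin (n + 1)) → EuclideanSpace ℝ (Fin (n + 1)) → ℝ)
    (hKnn : ∀ x ∈ Hup n, ∀ y ∈ Hup n, 0 ≤ K x y)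
    (hKscal : ∀ x ∈ Hup n, ∀ y ∈ Hup n, ∀ a : ℝ, 0 < a → K x y = K (a • x) (a • y))
    (hKtrans : ∀ x ∈ Hup n, ∀ y ∈ Hup n, ∀ z : EuclideanSpace ℝ (Fin n),
      K x y = K (x + emb z 0) (y + emb z 0)) :
    (∀ x ∈ Hup n, ∀ y ∈ Hup n,
      K x y = K (emb (0 : EuclideanSpace ℝ (Fin n)) 1)
        (emb (0 : EuclideanSpace ℝ (Fin n)) 1 + (vert x)⁻¹ • (y - x))) ∧
    ((∀ x ∈ Hup n, ∀ y ∈ Hup n, K x y = K y x) →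
      ∀ z ∈ Hm1 n,
        K (emb (0 : EuclideanSpace ℝ (Fin n)) 1) (emb (0 : EuclideanSpace ℝ (Fin n)) 1 + z)
          = K (emb (0 : EuclideanSpace ℝ (Fin n)) 1)
              (emb (0 : EuclideanSpace ℝ (Fin n)) 1 + (1 + vert z)⁻¹ • (-z))) := by
  have hmain : ∀ x ∈ Hup n, ∀ y ∈ Hup n,
      K x y = K (emb (0 : EuclideanSpace ℝ (Fin n)) 1)
        (emb (0 : EuclideanSpace ℝ (Fin n)) 1 + (vert x)⁻¹ • (y - x)) := by
    intro x hx y hy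
    have hxv : 0 < vert x := hx
    have hinv : 0 < (vert x)⁻¹ := inv_pos.mpr hxv
    have hx' : (vert x)⁻¹ • x ∈ Hup n := by
      simp only [Hup, Set.mem_setOf_eq, vert_smul]
      positivity
    have hy' : (vert x)⁻¹ • y ∈ Hup n := by
      have : 0 < vert y := hy
      simp only [Hup, Set.mem_setOf_eq, vert_smul]
      positivity
    have h1 : K x y = K ((vert x)⁻¹ • x) ((vert x)⁻¹ • y) := hKscal x hx y hy _ hinv
    set w : EuclideanSpace ℝ (Fin n) := -(tilde ((vert x)⁻¹ • x)) with hw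
    have h2 := hKtrans _ hx' _ hy' w
    have hv : vert ((vert x)⁻¹ • x) = 1 := by
      rw [vert_smul]; field_simp
    have he : (vert x)⁻¹ • x + emb w 0 = emb 0 1 := by
      have hdecomp := eq_emb ((vert x)⁻¹ • x)
      rw [hv] at hdecomp
      ext i
      refine Fin.lastCases ?_ (fun j => ?_) i
      · have : ((vert x)⁻¹ • x) (Fin.last n) = 1 := hv
        show ((vert x)⁻¹ • x) (Fin.last n) + emb w 0 (Fin.last n) = emb (0:EuclideanSpace ℝ (Fin n)) 1 (Fin.last n)
        simp [this, emb]
      · show ((vert x)⁻¹ • x) j.castSucc + emb w 0 j.castSucc = emb (0:EuclideanSpace ℝ (Fin n)) 1 j.castSucc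
        simp [emb, hw, tilde]
    have he2 : (vert x)⁻¹ • y + emb w 0 = emb 0 1 + (vert x)⁻¹ • (y - x) := by
      have : emb (0:EuclideanSpace ℝ (Fin n)) 1 + (vert x)⁻¹ • (y - x)
          = ((vert x)⁻¹ • x + emb w 0) + (vert x)⁻¹ • (y - x) := by rw [he]
      rw [this, smul_sub]
      abel
    rw [h1, h2, he, he2]
  refine ⟨hmain, ?_⟩
  intro hsym z hz
  have hz' : -1 < vert z := hz
  have he1 : emb (0 : EuclideanSpace ℝ (Fin n)) 1 ∈ Hup n := by
    simp [Hup, vert_emb]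
  have hez : emb (0 : EuclideanSpace ℝ (Fin n)) 1 + z ∈ Hup n := by
    simp only [Hup, Set.mem_setOf_eq, vert_add, vert_emb]
    linarith
  have h1 : K (emb (0 : EuclideanSpace ℝ (Fin n)) 1) (emb (0 : EuclideanSpace ℝ (Fin n)) 1 + z)
      = K (emb (0 : EuclideanSpace ℝ (Fin n)) 1 + z) (emb (0 : EuclideanSpace ℝ (Fin n)) 1) :=
    hsym _ he1 _ hez
  have h2 := hmain _ hez _ he1
  have hv : vert (emb (0 : EuclideanSpace ℝ (Fin n)) 1 + z) = 1 + vert z := by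
    rw [vert_add, vert_emb]
  rw [h1, h2, hv]
  congr 2
  abel
end
end

section
/- Assume B satisfies (B4-c), and for r ∈ (0, R̂/8] and y ∈ D define k_r(y) := |y|^{−d−α} Φ₁((r ∧ δ_D(y))/|y|) Φ₂((r ∨ δ_D(y))/|y|) ℓ((r ∧ δ_D(y))/(r ∨ δ_D(y))). Then: (i) there exists C > 0, independent of r, such that for all z ∈ U(r/2) \ U(r/2, r/8) and all y ∈ D \ U(r): B(z,y) |z−y|^{−d−α} ≥ C k_r(y); (ii) for every ε > (β₁ − β₂)₊ there exists C(ε) > 0, independent of r, such that for all z ∈ U(r/2) and all y ∈ D \ U(r): B(z,y) |z−y|^{−d−α} ≤ C(ε) (δ_D(z)/r)^{β₁−ε} k_r(y). -/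
open MeasureTheory Metric Set Filter
open scoped ENNReal NNReal Topology

noncomputable section

/-- The vertical distance `ρ_D(x) = x_d - Ψ(x̃)` in the chart. -/
def vrho {n : ℕ} (Ψ : EuclideanSpace ℝ (Fin n) → ℝ) (x : EuclideanSpace ℝ (Fin (n + 1))) : ℝ :=
  vert x - Ψ (tilde x)

/-- The box `U(a,b) = {x ∈ D : |x̃| < a, 0 < ρ_D(x) < b}`. -/
def Ubox (n : ℕ) (Ψ : EuclideanSpace ℝ (Fin n) → ℝ)
    (D : Set (EuclideanSpace ℝ (Fin (n + 1)))) (a b : ℝ) :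
    Set (EuclideanSpace ℝ (Fin (n + 1))) :=
  {x | x ∈ D ∧ ‖tilde x‖ < a ∧ 0 < vrho Ψ x ∧ vrho Ψ x < b}

/-- The lower Matuszewska index of a positive function `Φ` at zero. -/
def lowerMatIdx (Φ : ℝ → ℝ) : ℝ :=
  sSup {β : ℝ | ∃ a > 0, ∀ r s : ℝ, 0 < s → s ≤ r → r ≤ 1 → a * (r / s) ^ β ≤ Φ r / Φ s}

/-- The function `k_r(y)` of Lemma `l:estimates-of-J-for-BHP` (with `Q = 0`). -/
def kfun (n : ℕ) (D : Set (EuclideanSpace ℝ (Fin (n + 1)))) (Φ₁ Φ₂ ℓ : ℝ → ℝ) (α r : ℝ)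
    (y : EuclideanSpace ℝ (Fin (n + 1))) : ℝ :=
  ‖y‖ ^ (-(n + 1 : ℝ) - α) * Φ₁ (min r (infDist y (frontier D)) / ‖y‖)
    * Φ₂ (max r (infDist y (frontier D)) / ‖y‖)
    * ℓ (min r (infDist y (frontier D)) / max r (infDist y (frontier D)))

/-- lower bound on infDist from pointwise bounds -/
lemma le_infDist_of_forall {E : Type*} [PseudoMetricSpace E] {s : Set E} {x : E} {b : ℝ}
    (hs : s.Nonempty) (h : ∀ q ∈ s, b ≤ dist x q) : b ≤ Metric.infDist x s := by
  by_contra hlt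
  push_neg at hlt
  obtain ⟨q, hq, hd⟩ := (Metric.infDist_lt_iff hs).mp hlt
  exact absurd (h q hq) (not_le.mpr hd)

lemma rpow_ratio_le {x y c γ : ℝ} (hx : 0 < x) (hy : 0 < y) (hc : 1 ≤ c)
    (h1 : x ≤ c * y) (h2 : y ≤ c * x) : x ^ γ ≤ c ^ |γ| * y ^ γ := by
  have hc0 : (0:ℝ) < c := lt_of_lt_of_le one_pos hc
  rcases le_or_gt 0 γ with hγ | hγ
  · rw [abs_of_nonneg hγ]
    calc x ^ γ ≤ (c*y) ^ γ := Real.rpow_le_rpow hx.le h1 hγ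
    _ = c ^ γ * y ^ γ := Real.mul_rpow hc0.le hy.le
  · rw [abs_of_neg hγ]
    have h2' : y / c ≤ x := by rw [div_le_iff₀ hc0]; linarith [h2]
    calc x ^ γ ≤ (y/c) ^ γ := Real.rpow_le_rpow_of_nonpos (by positivity) h2' hγ.le
    _ = y ^ γ / c ^ γ := Real.div_rpow hy.le hc0.le γ
    _ = c ^ (-γ) * y ^ γ := by rw [Real.rpow_neg hc0.le]; field_simp

lemma mul_le_mul3 {a1 a2 a3 b1 b2 b3 : ℝ} (h1 : a1 ≤ b1) (h2 : a2 ≤ b2) (h3 : a3 ≤ b3)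
    (ha1 : 0 ≤ a1) (ha2 : 0 ≤ a2) (ha3 : 0 ≤ a3) : a1*a2*a3 ≤ b1*b2*b3 := by
  have hb1 : 0 ≤ b1 := ha1.trans h1
  have hb2 : 0 ≤ b2 := ha2.trans h2
  have h12 : a1*a2 ≤ b1*b2 := mul_le_mul h1 h2 ha2 hb1
  exact mul_le_mul h12 h3 ha3 (by positivity)

lemma mul_le_mul4 {a1 a2 a3 a4 b1 b2 b3 b4 : ℝ} (h1 : a1 ≤ b1) (h2 : a2 ≤ b2) (h3 : a3 ≤ b3)
    (h4 : a4 ≤ b4) (ha1 : 0 ≤ a1) (ha2 : 0 ≤ a2) (ha3 : 0 ≤ a3) (ha4 : 0 ≤ a4) :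
    a1*a2*a3*a4 ≤ b1*b2*b3*b4 := by
  have h123 := mul_le_mul3 h1 h2 h3 ha1 ha2 ha3
  have hb : (0:ℝ) ≤ a1*a2*a3 := by positivity
  exact mul_le_mul h123 h4 ha4 (le_trans hb h123)

lemma rpow_inv_ratio {a r : ℝ} (ha : 0 < a) (hr : 0 < r) (m : ℝ) :
    (r/a) ^ m = (a/r) ^ (-m) := by
  rw [Real.rpow_neg (by positivity), ← Real.inv_rpow (by positivity), inv_div]

lemma div_ratio_le {x w Y h c1 c2 : ℝ} (hY : 0 < Y) (hh : 0 < h) (hw : 0 ≤ w)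
    (hx : x ≤ c1 * w) (hhY : h ≤ c2 * Y) (hc1 : 0 ≤ c1) (hc2 : 0 ≤ c2) :
    x / Y ≤ (c1*c2) * (w / h) := by
  rw [← mul_div_assoc, div_le_div_iff₀ hY hh]
  calc x * h ≤ (c1*w) * (c2*Y) := mul_le_mul hx hhY hh.le (by positivity)
  _ = c1*c2*w*Y := by ring

/-- `Φ u ≤ c⁻¹ * u ^ γ` for `u ≤ 1` from lower scaling. -/
lemma val_up_of_scaleL {Φ : ℝ → ℝ} (hpos : ∀ r, 0 < r → 0 < Φ r) (hone : ∀ r, 1 ≤ r → Φ r = 1)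
    {c γ : ℝ} (hc : 0 < c)
    (hscL : ∀ r s : ℝ, 0 < s → s ≤ r → r ≤ 1 → c * (r/s) ^ γ ≤ Φ r / Φ s)
    {u : ℝ} (hu : 0 < u) (hu1 : u ≤ 1) : Φ u ≤ c⁻¹ * u ^ γ := by
  have h := hscL 1 u hu hu1 le_rfl
  rw [hone 1 le_rfl] at h
  have hΦu : 0 < Φ u := hpos u hu
  have h1u : (1:ℝ)/u = u⁻¹ := one_div u
  rw [h1u] at h
  have hiu : (u⁻¹ : ℝ) ^ γ = (u ^ γ)⁻¹ := Real.inv_rpow hu.le γ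
  rw [hiu] at h
  have hupow : (0:ℝ) < u ^ γ := Real.rpow_pos_of_pos hu γ
  rw [le_div_iff₀ hΦu] at h
  calc Φ u = (c * (u^γ)⁻¹ * Φ u) * ((u^γ) * c⁻¹) := by field_simp
  _ ≤ 1 * ((u^γ) * c⁻¹) := mul_le_mul_of_nonneg_right h (by positivity)
  _ = c⁻¹ * u ^ γ := by ring

/-- `c⁻¹ * u ^ γ ≤ Φ u` for `u ≤ 1` from upper scaling. -/
lemma val_low_of_scaleU {Φ : ℝ → ℝ} (hpos : ∀ r, 0 < r → 0 < Φ r) (hone : ∀ r, 1 ≤ r → Φ r = 1)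
    {c γ : ℝ} (hc : 0 < c)
    (hscU : ∀ r s : ℝ, 0 < s → s ≤ r → r ≤ 1 → Φ r / Φ s ≤ c * (r/s) ^ γ)
    {u : ℝ} (hu : 0 < u) (hu1 : u ≤ 1) : c⁻¹ * u ^ γ ≤ Φ u := by
  have h := hscU 1 u hu hu1 le_rfl
  rw [hone 1 le_rfl] at h
  have hΦu : 0 < Φ u := hpos u hu
  rw [one_div u, Real.inv_rpow hu.le] at h
  have hupow : (0:ℝ) < u ^ γ := Real.rpow_pos_of_pos hu γ
  rw [div_le_iff₀ hΦu] at h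
  -- h : 1 ≤ c * (u ^ γ)⁻¹ * Φ u
  calc c⁻¹ * u ^ γ = (c⁻¹ * u ^ γ) * 1 := by ring
  _ ≤ (c⁻¹ * u ^ γ) * (c * (u^γ)⁻¹ * Φ u) := by
      apply mul_le_mul_of_nonneg_left h (by positivity)
  _ = Φ u := by field_simp


lemma le_inv_mul_of_mul_le' {c x A B : ℝ} (hc : 0 < c) (hx : 0 < x)
    (h : c * x * A ≤ B) : A ≤ c⁻¹ * x⁻¹ * B := by
  calc A = (c*x*A) * (c⁻¹*x⁻¹) := by field_simp
  _ ≤ B * (c⁻¹*x⁻¹) := mul_le_mul_of_nonneg_right h (by positivity)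
  _ = c⁻¹*x⁻¹*B := by ring

/-- The set in `lowerMatIdx`: membership for every `γ` below the sup, plus nonnegativity. -/
lemma matIdx_lemma (Φ : ℝ → ℝ) (hpos : ∀ r, 0 < r → 0 < Φ r)
    (b Bu cL cU : ℝ) (hb : 0 ≤ b) (hcL : 0 < cL) (hcU : 0 < cU)
    (hscL : ∀ r s : ℝ, 0 < s → s ≤ r → r ≤ 1 → cL * (r/s) ^ b ≤ Φ r / Φ s)
    (hscU : ∀ r s : ℝ, 0 < s → s ≤ r → r ≤ 1 → Φ r / Φ s ≤ cU * (r/s) ^ Bu) :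
    0 ≤ lowerMatIdx Φ ∧ b ≤ lowerMatIdx Φ ∧
      ∀ γ : ℝ, γ < lowerMatIdx Φ →
        ∃ a : ℝ, 0 < a ∧ ∀ r s : ℝ, 0 < s → s ≤ r → r ≤ 1 → a * (r/s) ^ γ ≤ Φ r / Φ s := by
  set S := {β : ℝ | ∃ a > 0, ∀ r s : ℝ, 0 < s → s ≤ r → r ≤ 1 → a * (r / s) ^ β ≤ Φ r / Φ s}
    with hS
  have hlm : lowerMatIdx Φ = sSup S := rfl
  have hbS : b ∈ S := ⟨cL, hcL, hscL⟩
  have hSne : S.Nonempty := ⟨b, hbS⟩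
  have hbdd : BddAbove S := by
    refine ⟨Bu, fun β hβ => ?_⟩
    obtain ⟨a, ha, hsc⟩ := hβ
    by_contra hgt
    push_neg at hgt
    set M := cU / a with hM
    have hM0 : 0 < M := by positivity
    set T : ℝ := max 1 ((M+1) ^ (1/(β-Bu))) with hT
    have hT1 : (1:ℝ) ≤ T := le_max_left _ _
    have hTpos : (0:ℝ) < T := lt_of_lt_of_le one_pos hT1
    have hs0 : (0:ℝ) < T⁻¹ := by positivity
    have hs1 : T⁻¹ ≤ 1 := by
      rw [inv_le_one_iff₀]; right; exact hT1
    have h1 := hsc 1 T⁻¹ hs0 hs1 le_rfl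
    have h2 := hscU 1 T⁻¹ hs0 hs1 le_rfl
    have hrs : (1:ℝ) / T⁻¹ = T := by field_simp
    rw [hrs] at h1 h2
    have hkey : a * T ^ β ≤ cU * T ^ Bu := le_trans h1 h2
    have hTb : (0:ℝ) < T ^ Bu := Real.rpow_pos_of_pos hTpos Bu
    have hdiff : T ^ (β - Bu) ≤ M := by
      rw [Real.rpow_sub hTpos]
      rw [div_le_iff₀ hTb] at *
      rw [hM, div_mul_eq_mul_div, le_div_iff₀ (by positivity : (0:ℝ) < a)]
      nlinarith [hkey, hTb]
    have hlow : M + 1 ≤ T ^ (β - Bu) := by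
      have hmb : (0:ℝ) < β - Bu := by linarith
      have : ((M+1) ^ (1/(β-Bu))) ^ (β - Bu) ≤ T ^ (β - Bu) :=
        Real.rpow_le_rpow (by positivity) (le_max_right _ _) hmb.le
      calc M + 1 = ((M+1) ^ (1/(β-Bu))) ^ (β - Bu) := by
            rw [← Real.rpow_mul (by positivity : (0:ℝ) ≤ M+1),
              one_div_mul_cancel (ne_of_gt hmb), Real.rpow_one]
      _ ≤ T ^ (β - Bu) := this
    linarith
  have h0le : b ≤ lowerMatIdx Φ := by
    rw [hlm]; exact le_csSup hbdd hbS
  refine ⟨le_trans hb h0le, h0le, fun γ hγ => ?_⟩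
  rw [hlm] at hγ
  obtain ⟨β, hβS, hγβ⟩ := exists_lt_of_lt_csSup hSne hγ
  obtain ⟨a, ha, hsc⟩ := hβS
  refine ⟨a, ha, fun r s hs hsr hr1 => ?_⟩
  have hrs1 : (1:ℝ) ≤ r / s := (one_le_div hs).mpr hsr
  calc a * (r/s) ^ γ ≤ a * (r/s) ^ β := by
        apply mul_le_mul_of_nonneg_left _ ha.le
        exact Real.rpow_le_rpow_of_exponent_le hrs1 hγβ.le
  _ ≤ Φ r / Φ s := hsc r s hs hsr hr1

/-- comparability at bounded ratio -/
lemma comp_lemma (Φ : ℝ → ℝ) (hpos : ∀ r, 0 < r → 0 < Φ r) (hone : ∀ r, 1 ≤ r → Φ r = 1)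
    (cL cU γL γU : ℝ) (hcL : 0 < cL) (hcU : 0 < cU)
    (hscL : ∀ r s : ℝ, 0 < s → s ≤ r → r ≤ 1 → cL * (r/s) ^ γL ≤ Φ r / Φ s)
    (hscU : ∀ r s : ℝ, 0 < s → s ≤ r → r ≤ 1 → Φ r / Φ s ≤ cU * (r/s) ^ γU)
    (K : ℝ) (hK : 1 ≤ K) :
    ∃ M : ℝ, 0 < M ∧ ∀ u v : ℝ, 0 < u → 0 < v → u ≤ K * v → v ≤ K * u → Φ u ≤ M * Φ v := by
  have hK0 : (0:ℝ) < K := lt_of_lt_of_le one_pos hK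
  set PL := K ^ |γL| with hPL
  set PU := K ^ |γU| with hPU
  have hPL1 : 1 ≤ PL := Real.one_le_rpow hK (abs_nonneg _)
  have hPU1 : 1 ≤ PU := Real.one_le_rpow hK (abs_nonneg _)
  have hPL0 : 0 < PL := lt_of_lt_of_le one_pos hPL1
  have hPU0 : 0 < PU := lt_of_lt_of_le one_pos hPU1
  refine ⟨cL⁻¹ * PL + cU * PU + 1, by positivity, fun u v hu hv huv hvu => ?_⟩
  have hΦu := hpos u hu
  have hΦv := hpos v hv
  rcases le_or_gt u 1 with hu1 | hu1
  · rcases le_or_gt v 1 with hv1 | hv1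
    · rcases le_total u v with huv' | hvu'
      · have h := hscL v u hu huv' hv1
        have hx : (0:ℝ) < (v/u) ^ γL := Real.rpow_pos_of_pos (by positivity) _
        have h2 : cL * (v/u) ^ γL * Φ u ≤ Φ v := (le_div_iff₀ hΦu).mp h
        have h3 : Φ u ≤ cL⁻¹ * ((v/u) ^ γL)⁻¹ * Φ v :=
          le_inv_mul_of_mul_le' hcL hx h2
        have hiv : ((v/u) ^ γL)⁻¹ = (u/v) ^ γL := by
          rw [← Real.inv_rpow (by positivity : (0:ℝ) ≤ v/u), inv_div]
        rw [hiv] at h3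
        have hb : (u/v) ^ γL ≤ PL * 1 ^ γL :=
          rpow_ratio_le (by positivity) one_pos hK
            (by rw [mul_one]; calc u/v ≤ 1 := by rw [div_le_one hv]; exact huv'
                _ ≤ K := hK)
            (by rw [← mul_div_assoc, one_le_div hv]; exact hvu)
        rw [Real.one_rpow, mul_one] at hb
        calc Φ u ≤ cL⁻¹ * (u/v) ^ γL * Φ v := h3
        _ ≤ (cL⁻¹ * PL + cU * PU + 1) * Φ v := by
            apply mul_le_mul_of_nonneg_right _ hΦv.le
            have : cL⁻¹ * (u/v) ^ γL ≤ cL⁻¹ * PL := by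
              apply mul_le_mul_of_nonneg_left hb (by positivity)
            nlinarith [mul_pos hcU hPU0]
      · have h := hscU u v hv hvu' hu1
        have h2 : Φ u ≤ cU * (u/v) ^ γU * Φ v := by
          rw [div_le_iff₀ hΦv] at h; linarith
        have hb : (u/v) ^ γU ≤ PU * 1 ^ γU :=
          rpow_ratio_le (by positivity) one_pos hK
            (by rw [mul_one, div_le_iff₀ hv]; exact huv)
            (by have h1uv : (1:ℝ) ≤ u/v := (one_le_div hv).mpr hvu'
                nlinarith)
        rw [Real.one_rpow, mul_one] at hb
        calc Φ u ≤ cU * (u/v) ^ γU * Φ v := h2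
        _ ≤ (cL⁻¹ * PL + cU * PU + 1) * Φ v := by
            apply mul_le_mul_of_nonneg_right _ hΦv.le
            have : cU * (u/v) ^ γU ≤ cU * PU := mul_le_mul_of_nonneg_left hb hcU.le
            nlinarith [mul_pos (inv_pos.mpr hcL) hPL0]
    · have hΦv1 : Φ v = 1 := hone v hv1.le
      have h3 : Φ u ≤ cL⁻¹ * u ^ γL := val_up_of_scaleL hpos hone hcL hscL hu hu1
      have hb : u ^ γL ≤ PL * 1 ^ γL :=
        rpow_ratio_le hu one_pos hK (by nlinarith) (by nlinarith)
      rw [Real.one_rpow, mul_one] at hb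
      rw [hΦv1]
      have : Φ u ≤ cL⁻¹ * PL := by
        calc Φ u ≤ cL⁻¹ * u ^ γL := h3
        _ ≤ cL⁻¹ * PL := mul_le_mul_of_nonneg_left hb (by positivity)
      nlinarith [mul_pos hcU hPU0]
  · have hΦu1 : Φ u = 1 := hone u hu1.le
    rcases le_or_gt 1 v with hv1 | hv1
    · have hΦv1 : Φ v = 1 := hone v hv1
      rw [hΦu1, hΦv1, mul_one]
      nlinarith [mul_pos (inv_pos.mpr hcL) hPL0, mul_pos hcU hPU0]
    · have h3 : cU⁻¹ * v ^ γU ≤ Φ v := val_low_of_scaleU hpos hone hcU hscU hv hv1.le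
      have hb : (1:ℝ) ^ γU ≤ PU * v ^ γU :=
        rpow_ratio_le one_pos hv hK (by nlinarith) (by nlinarith)
      rw [Real.one_rpow] at hb
      rw [hΦu1]
      have h4 : 1 ≤ cU * PU * Φ v := by
        have h5 : PU * (cU⁻¹ * v ^ γU) ≤ PU * Φ v := mul_le_mul_of_nonneg_left h3 hPU0.le
        calc (1:ℝ) ≤ PU * v ^ γU := hb
        _ = cU * (PU * (cU⁻¹ * v ^ γU)) := by field_simp
        _ ≤ cU * (PU * Φ v) := mul_le_mul_of_nonneg_left h5 hcU.le
        _ = cU * PU * Φ v := by ring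
      calc (1:ℝ) ≤ cU * PU * Φ v := h4
      _ ≤ (cL⁻¹ * PL + cU * PU + 1) * Φ v := by
          apply mul_le_mul_of_nonneg_right _ hΦv.le
          nlinarith [mul_pos (inv_pos.mpr hcL) hPL0]


lemma decay_lemma (Φ : ℝ → ℝ) (hpos : ∀ r, 0 < r → 0 < Φ r) (hone : ∀ r, 1 ≤ r → Φ r = 1)
    (c γ : ℝ) (hc : 0 < c)
    (hscL : ∀ r s : ℝ, 0 < s → s ≤ r → r ≤ 1 → c * (r/s) ^ γ ≤ Φ r / Φ s)
    (K M₀ : ℝ) (hK : 1 ≤ K) (hM₀ : 0 < M₀)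
    (hcomp : ∀ u v : ℝ, 0 < u → 0 < v → u ≤ K * v → v ≤ K * u → Φ u ≤ M₀ * Φ v) :
    ∃ M : ℝ, 0 < M ∧ ∀ u v : ℝ, 0 < u → 0 < v → v ≤ K → u ≤ K * v →
      Φ u ≤ M * (u/v) ^ γ * Φ v := by
  have hK0 : (0:ℝ) < K := lt_of_lt_of_le one_pos hK
  set P := K ^ |γ| with hP
  have hP1 : 1 ≤ P := Real.one_le_rpow hK (abs_nonneg _)
  have hP0 : 0 < P := lt_of_lt_of_le one_pos hP1
  refine ⟨(c⁻¹ + 1 + M₀) * P, by positivity, fun u v hu hv hvK huv => ?_⟩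
  have hΦu := hpos u hu
  have hΦv := hpos v hv
  have hrp : (0:ℝ) < (u/v) ^ γ := Real.rpow_pos_of_pos (by positivity) _
  have hcoeff : ∀ e : ℝ, 0 ≤ e → e ≤ (c⁻¹ + 1 + M₀) * P → Φ u ≤ e * (u/v) ^ γ * Φ v →
      Φ u ≤ (c⁻¹ + 1 + M₀) * P * (u/v) ^ γ * Φ v := by
    intro e he hle hb
    calc Φ u ≤ e * (u/v) ^ γ * Φ v := hb
    _ ≤ (c⁻¹ + 1 + M₀) * P * (u/v) ^ γ * Φ v := by
        apply mul_le_mul_of_nonneg_right _ hΦv.le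
        exact mul_le_mul_of_nonneg_right hle hrp.le
  rcases le_or_gt u v with huv' | hvu'
  · rcases le_or_gt v 1 with hv1 | hv1
    · have h := hscL v u hu huv' hv1
      have hx : (0:ℝ) < (v/u) ^ γ := Real.rpow_pos_of_pos (by positivity) _
      have h2 : c * (v/u) ^ γ * Φ u ≤ Φ v := (le_div_iff₀ hΦu).mp h
      have h3 : Φ u ≤ c⁻¹ * ((v/u) ^ γ)⁻¹ * Φ v := le_inv_mul_of_mul_le' hc hx h2
      have hiv : ((v/u) ^ γ)⁻¹ = (u/v) ^ γ := by
        rw [← Real.inv_rpow (by positivity : (0:ℝ) ≤ v/u), inv_div]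
      rw [hiv] at h3
      exact hcoeff c⁻¹ (by positivity) (by nlinarith [mul_le_mul_of_nonneg_left hP1 (by positivity : (0:ℝ) ≤ c⁻¹ + 1 + M₀), mul_pos (by positivity : (0:ℝ) < 1 + M₀) hP0, mul_pos hM₀ hP0, inv_pos.mpr hc, hP0, hP1, hM₀]) h3
    · have hΦv1 : Φ v = 1 := hone v hv1.le
      rcases le_or_gt u 1 with hu1 | hu1
      · have h3 : Φ u ≤ c⁻¹ * u ^ γ := val_up_of_scaleL hpos hone hc hscL hu hu1
        have hvm : v ^ γ ≤ P * 1 ^ γ :=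
          rpow_ratio_le hv one_pos hK (by rw [mul_one]; exact hvK) (by nlinarith)
        rw [Real.one_rpow, mul_one] at hvm
        have hsplit : u ^ γ = (u/v) ^ γ * v ^ γ := by
          rw [← Real.mul_rpow (by positivity) hv.le, div_mul_cancel₀ _ (ne_of_gt hv)]
        have h4 : Φ u ≤ c⁻¹ * P * (u/v) ^ γ * Φ v := by
          rw [hΦv1, mul_one]
          calc Φ u ≤ c⁻¹ * u ^ γ := h3
          _ = c⁻¹ * ((u/v) ^ γ * v ^ γ) := by rw [← hsplit]
          _ ≤ c⁻¹ * ((u/v) ^ γ * P) := by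
              apply mul_le_mul_of_nonneg_left _ (by positivity)
              exact mul_le_mul_of_nonneg_left hvm hrp.le
          _ = c⁻¹ * P * (u/v) ^ γ := by ring
        exact hcoeff (c⁻¹ * P) (by positivity) (by nlinarith [mul_le_mul_of_nonneg_left hP1 (by positivity : (0:ℝ) ≤ c⁻¹ + 1 + M₀), mul_pos (by positivity : (0:ℝ) < 1 + M₀) hP0, mul_pos hM₀ hP0, inv_pos.mpr hc, hP0, hP1, hM₀]) h4
      · have hΦu1 : Φ u = 1 := hone u hu1.le
        have h1p : (1:ℝ) ^ γ ≤ P * (u/v) ^ γ :=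
          rpow_ratio_le one_pos (by positivity) hK
            (by rw [← mul_div_assoc, one_le_div hv]; nlinarith)
            (by rw [mul_one, div_le_iff₀ hv]; exact huv)
        rw [Real.one_rpow] at h1p
        have h4 : Φ u ≤ 1 * P * (u/v) ^ γ * Φ v := by
          rw [hΦu1, hΦv1, one_mul, mul_one]; exact h1p
        exact hcoeff (1*P) (by positivity) (by rw [one_mul]; nlinarith [mul_le_mul_of_nonneg_left hP1 (by positivity : (0:ℝ) ≤ c⁻¹ + 1 + M₀), mul_pos (by positivity : (0:ℝ) < 1 + M₀) hP0, mul_pos hM₀ hP0, inv_pos.mpr hc, hP0, hP1, hM₀]) (by rw [one_mul] at h4 ⊢; exact h4)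
  · have h2 : Φ u ≤ M₀ * Φ v := hcomp u v hu hv huv (by nlinarith)
    have h1p : (1:ℝ) ^ γ ≤ P * (u/v) ^ γ :=
      rpow_ratio_le one_pos (by positivity) hK
        (by rw [← mul_div_assoc, one_le_div hv]; nlinarith)
        (by rw [mul_one, div_le_iff₀ hv]; exact huv)
    rw [Real.one_rpow] at h1p
    have h4 : Φ u ≤ M₀ * P * (u/v) ^ γ * Φ v := by
      calc Φ u ≤ M₀ * Φ v := h2
      _ = M₀ * 1 * Φ v := by ring
      _ ≤ M₀ * (P * (u/v) ^ γ) * Φ v := by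
          apply mul_le_mul_of_nonneg_right _ hΦv.le
          exact mul_le_mul_of_nonneg_left h1p hM₀.le
      _ = M₀ * P * (u/v) ^ γ * Φ v := by ring
    exact hcoeff (M₀ * P) (by positivity) (by nlinarith [mul_le_mul_of_nonneg_left hP1 (by positivity : (0:ℝ) ≤ c⁻¹ + 1 + M₀), mul_pos (by positivity : (0:ℝ) < 1 + M₀) hP0, mul_pos hM₀ hP0, inv_pos.mpr hc, hP0, hP1, hM₀]) h4

lemma ell_val_up (ℓ : ℝ → ℝ) (hpos : ∀ r, 0 < r → 0 < ℓ r) (hone : ∀ r, 1 ≤ r → ℓ r = 1)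
    (c m : ℝ) (hc : 0 < c)
    (hscL : ∀ r s : ℝ, 0 < s → s ≤ r → r ≤ 1 → c⁻¹ * (r/s) ^ (-m) ≤ ℓ r / ℓ s)
    {u : ℝ} (hu : 0 < u) (hu1 : u ≤ 1) : ℓ u ≤ c * u ^ (-m) := by
  have h := hscL 1 u hu hu1 le_rfl
  rw [hone 1 le_rfl] at h
  have hlu := hpos u hu
  have hw : ((1:ℝ)/u) ^ (-m) = (u ^ (-m))⁻¹ := by
    rw [one_div, Real.inv_rpow hu.le]
  rw [hw] at h
  have hx : (0:ℝ) < (u ^ (-m))⁻¹ := by positivity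
  have h2 : c⁻¹ * (u ^ (-m))⁻¹ * ℓ u ≤ 1 := by
    rw [le_div_iff₀ hlu] at h; linarith
  have h3 := le_inv_mul_of_mul_le' (inv_pos.mpr hc) hx h2
  rw [inv_inv, inv_inv, mul_one] at h3
  exact h3

lemma ell_up (ℓ : ℝ → ℝ) (hpos : ∀ r, 0 < r → 0 < ℓ r) (hone : ∀ r, 1 ≤ r → ℓ r = 1)
    (c m : ℝ) (hc : 0 < c) (hm : 0 ≤ m)
    (hscU : ∀ r s : ℝ, 0 < s → s ≤ r → r ≤ 1 → ℓ r / ℓ s ≤ c * (r/s) ^ m)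
    (K : ℝ) (hK : 1 ≤ K) :
    ∃ M : ℝ, 0 < M ∧ ∀ u v : ℝ, 0 < v → v ≤ u → u ≤ K → ℓ u ≤ M * (u/v) ^ m * ℓ v := by
  refine ⟨c + 1, by positivity, fun u v hv hvu huK => ?_⟩
  have hu : 0 < u := lt_of_lt_of_le hv hvu
  have hlu := hpos u hu
  have hlv := hpos v hv
  have hrp : (0:ℝ) < (u/v) ^ m := Real.rpow_pos_of_pos (by positivity) _
  rcases le_or_gt u 1 with hu1 | hu1
  · have h := hscU u v hv hvu hu1
    have h2 : ℓ u ≤ c * (u/v) ^ m * ℓ v := by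
      rw [div_le_iff₀ hlv] at h; linarith
    calc ℓ u ≤ c * (u/v) ^ m * ℓ v := h2
    _ ≤ (c+1) * (u/v) ^ m * ℓ v := by
        apply mul_le_mul_of_nonneg_right _ hlv.le
        apply mul_le_mul_of_nonneg_right _ hrp.le
        linarith
  · have hlu1 : ℓ u = 1 := hone u hu1.le
    rcases le_or_gt v 1 with hv1 | hv1
    · have h1 : c⁻¹ * v ^ m ≤ ℓ v := val_low_of_scaleU hpos hone hc hscU hv hv1
      have h2 : (v ^ m)⁻¹ ≤ (u/v) ^ m := by
        have hdd : (1:ℝ)/v ≤ u/v := by rw [div_le_div_iff₀ hv hv]; nlinarith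
        have hstep : ((1:ℝ)/v) ^ m ≤ (u/v) ^ m := Real.rpow_le_rpow (by positivity) hdd hm
        rwa [one_div, Real.inv_rpow hv.le] at hstep
      have h3 : (v^m)⁻¹ * (c⁻¹ * v^m) ≤ (u/v)^m * ℓ v :=
        mul_le_mul h2 h1 (by positivity) (by positivity)
      have h4 : (v^m)⁻¹ * (c⁻¹ * v^m) = c⁻¹ := by
        have : v ^ m ≠ 0 := ne_of_gt (Real.rpow_pos_of_pos hv m)
        field_simp
      rw [h4] at h3
      rw [hlu1]
      calc (1:ℝ) = c * c⁻¹ := by field_simp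
      _ ≤ c * ((u/v)^m * ℓ v) := mul_le_mul_of_nonneg_left h3 hc.le
      _ ≤ (c+1) * (u/v) ^ m * ℓ v := by nlinarith [mul_pos hrp hlv]
    · have hlv1 : ℓ v = 1 := hone v hv1.le
      rw [hlu1, hlv1, mul_one]
      have h2 : (1:ℝ) ≤ (u/v) ^ m := Real.one_le_rpow ((one_le_div hv).mpr hvu) hm
      nlinarith
  
lemma ell_down (ℓ : ℝ → ℝ) (hpos : ∀ r, 0 < r → 0 < ℓ r) (hone : ∀ r, 1 ≤ r → ℓ r = 1)
    (c m : ℝ) (hc : 0 < c) (hm : 0 ≤ m)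
    (hscL : ∀ r s : ℝ, 0 < s → s ≤ r → r ≤ 1 → c⁻¹ * (r/s) ^ (-m) ≤ ℓ r / ℓ s)
    (K : ℝ) (hK : 1 ≤ K) :
    ∃ M : ℝ, 0 < M ∧ ∀ u v : ℝ, 0 < v → v ≤ u → u ≤ K → ℓ v ≤ M * (u/v) ^ m * ℓ u := by
  refine ⟨c + 1, by positivity, fun u v hv hvu huK => ?_⟩
  have hu : 0 < u := lt_of_lt_of_le hv hvu
  have hlu := hpos u hu
  have hlv := hpos v hv
  have hrp : (0:ℝ) < (u/v) ^ m := Real.rpow_pos_of_pos (by positivity) _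
  rcases le_or_gt u 1 with hu1 | hu1
  · have h := hscL u v hv hvu hu1
    have hx : (0:ℝ) < (u/v) ^ (-m) := Real.rpow_pos_of_pos (by positivity) _
    have h2 : c⁻¹ * (u/v) ^ (-m) * ℓ v ≤ ℓ u := (le_div_iff₀ hlv).mp h
    have h3 := le_inv_mul_of_mul_le' (inv_pos.mpr hc) hx h2
    rw [inv_inv] at h3
    have hiv : ((u/v) ^ (-m))⁻¹ = (u/v) ^ m := by
      rw [Real.rpow_neg (by positivity), inv_inv]
    rw [hiv] at h3
    calc ℓ v ≤ c * (u/v) ^ m * ℓ u := h3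
    _ ≤ (c+1) * (u/v) ^ m * ℓ u := by
        apply mul_le_mul_of_nonneg_right _ hlu.le
        apply mul_le_mul_of_nonneg_right _ hrp.le
        linarith
  · have hlu1 : ℓ u = 1 := hone u hu1.le
    rw [hlu1, mul_one]
    rcases le_or_gt v 1 with hv1 | hv1
    · have h1 : ℓ v ≤ c * v ^ (-m) := ell_val_up ℓ hpos hone c m hc hscL hv hv1
      have h2 : v ^ (-m) ≤ (u/v) ^ m := by
        have hdd : (1:ℝ)/v ≤ u/v := by rw [div_le_div_iff₀ hv hv]; nlinarith
        have hstep : ((1:ℝ)/v) ^ m ≤ (u/v) ^ m := Real.rpow_le_rpow (by positivity) hdd hm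
        rw [Real.rpow_neg hv.le]
        rwa [one_div, Real.inv_rpow hv.le] at hstep
      calc ℓ v ≤ c * v ^ (-m) := h1
      _ ≤ c * (u/v) ^ m := mul_le_mul_of_nonneg_left h2 hc.le
      _ ≤ (c+1) * (u/v) ^ m := mul_le_mul_of_nonneg_right (by linarith) hrp.le
    · have hlv1 : ℓ v = 1 := hone v hv1.le
      rw [hlv1]
      have h2 : (1:ℝ) ≤ (u/v) ^ m := Real.one_le_rpow ((one_le_div hv).mpr hvu) hm
      nlinarith

lemma eq_of_sq_eq {a b : ℝ} (ha : 0 ≤ a) (hb : 0 ≤ b) (h : a^2 = b^2) : a = b := by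
  apply le_antisymm <;> nlinarith [ha, hb, h, sq_nonneg (a-b), sq_nonneg (a+b)]

section Geometry

variable {n : ℕ}

lemma tilde_sub (x y : EuclideanSpace ℝ (Fin (n+1))) :
    tilde (x - y) = tilde x - tilde y := by ext i; simp [tilde]

lemma vert_sub (x y : EuclideanSpace ℝ (Fin (n+1))) : vert (x - y) = vert x - vert y := rfl

lemma norm_split (x : EuclideanSpace ℝ (Fin (n+1))) :
    ‖x‖^2 = ‖tilde x‖^2 + (vert x)^2 := by
  rw [EuclideanSpace.norm_eq, EuclideanSpace.norm_eq]
  rw [Real.sq_sqrt (by positivity), Real.sq_sqrt (by positivity)]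
  rw [Fin.sum_univ_castSucc]
  simp [tilde, vert, Real.norm_eq_abs, sq_abs]

lemma norm_tilde_le (x : EuclideanSpace ℝ (Fin (n+1))) : ‖tilde x‖ ≤ ‖x‖ := by
  nlinarith [norm_split x, norm_nonneg x, norm_nonneg (tilde x), sq_nonneg (vert x)]

lemma abs_vert_le (x : EuclideanSpace ℝ (Fin (n+1))) : |vert x| ≤ ‖x‖ := by
  nlinarith [norm_split x, norm_nonneg x, norm_nonneg (tilde x), sq_abs (vert x),
    abs_nonneg (vert x)]

lemma tilde_snoc (w : EuclideanSpace ℝ (Fin n)) (cc : ℝ) :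
    tilde (show EuclideanSpace ℝ (Fin (n+1)) from WithLp.toLp 2 (Fin.snoc w.ofLp cc)) = w := by
  ext i
  simp [tilde, Fin.snoc_castSucc]

lemma vert_snoc (w : EuclideanSpace ℝ (Fin n)) (cc : ℝ) :
    vert (show EuclideanSpace ℝ (Fin (n+1)) from WithLp.toLp 2 (Fin.snoc w.ofLp cc)) = cc := by
  simp [vert, Fin.snoc_last]

lemma tilde_lip : LipschitzWith 1 (tilde (n := n)) := by
  apply LipschitzWith.of_dist_le_mul
  intro x y
  rw [dist_eq_norm, dist_eq_norm, ← tilde_sub]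
  simpa using norm_tilde_le (x - y)

lemma vert_lip : LipschitzWith 1 (vert (n := n)) := by
  apply LipschitzWith.of_dist_le_mul
  intro x y
  rw [dist_eq_norm, dist_eq_norm, ← vert_sub]
  simpa [Real.norm_eq_abs] using abs_vert_le (x - y)

variable {Λ Rh : ℝ} {Ψ : EuclideanSpace ℝ (Fin n) → ℝ}
  {D : Set (EuclideanSpace ℝ (Fin (n+1)))}

lemma psi_lip (hΛ : 0 < Λ) (hRh : 0 < Rh) (hRh1 : Rh ≤ min 1 (1 / (2 * Λ)))
    (hΨdiff : Differentiable ℝ Ψ) (hgrad0 : fderiv ℝ Ψ 0 = 0)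
    (hgradlip : ∀ y z : EuclideanSpace ℝ (Fin n),
      ‖fderiv ℝ Ψ y - fderiv ℝ Ψ z‖ ≤ Λ * ‖y - z‖) :
    ∀ u v : EuclideanSpace ℝ (Fin n), ‖u‖ ≤ Rh → ‖v‖ ≤ Rh →
      |Ψ u - Ψ v| ≤ 1/2 * ‖u - v‖ := by
  intro u v hu hv
  have hball : ∀ w ∈ Metric.closedBall (0 : EuclideanSpace ℝ (Fin n)) Rh,
      ‖fderiv ℝ Ψ w‖ ≤ 1/2 := by
    intro w hw
    rw [Metric.mem_closedBall, dist_zero_right] at hw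
    have h1 := hgradlip w 0
    rw [hgrad0, sub_zero, sub_zero] at h1
    have hΛRh : Λ * Rh ≤ 1/2 := by
      have h2 : Rh ≤ 1/(2*Λ) := le_trans hRh1 (min_le_right _ _)
      rw [le_div_iff₀ (by positivity)] at h2
      linarith
    calc ‖fderiv ℝ Ψ w‖ ≤ Λ * ‖w‖ := h1
    _ ≤ Λ * Rh := mul_le_mul_of_nonneg_left hw hΛ.le
    _ ≤ 1/2 := hΛRh
  have hres := Convex.norm_image_sub_le_of_norm_fderiv_le
    (fun w _ => hΨdiff.differentiableAt) hball (convex_closedBall _ _)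
    (by simpa [Metric.mem_closedBall, dist_zero_right] using hv)
    (by simpa [Metric.mem_closedBall, dist_zero_right] using hu)
  simpa [Real.norm_eq_abs] using hres

lemma psi_val (hΛ : 0 < Λ) (hRh : 0 < Rh) (hRh1 : Rh ≤ min 1 (1 / (2 * Λ)))
    (hΨdiff : Differentiable ℝ Ψ) (hΨ0 : Ψ 0 = 0) (hgrad0 : fderiv ℝ Ψ 0 = 0)
    (hgradlip : ∀ y z : EuclideanSpace ℝ (Fin n),
      ‖fderiv ℝ Ψ y - fderiv ℝ Ψ z‖ ≤ Λ * ‖y - z‖) :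
    ∀ u : EuclideanSpace ℝ (Fin n), ‖u‖ ≤ Rh → |Ψ u| ≤ 1/2 * ‖u‖ := by
  intro u hu
  have := psi_lip hΛ hRh hRh1 hΨdiff hgrad0 hgradlip u 0 hu (by simpa using hRh.le)
  simpa [hΨ0] using this

end Geometry

section Geometry2

variable {n : ℕ} {Λ Rh : ℝ} {Ψ : EuclideanSpace ℝ (Fin n) → ℝ}
  {D : Set (EuclideanSpace ℝ (Fin (n+1)))}

lemma graph_frontier (hΛ : 0 < Λ) (hRh : 0 < Rh) (hRh1 : Rh ≤ min 1 (1 / (2 * Λ)))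
    (hΨdiff : Differentiable ℝ Ψ) (hΨ0 : Ψ 0 = 0) (hgrad0 : fderiv ℝ Ψ 0 = 0)
    (hgradlip : ∀ y z : EuclideanSpace ℝ (Fin n),
      ‖fderiv ℝ Ψ y - fderiv ℝ Ψ z‖ ≤ Λ * ‖y - z‖)
    (hDopen : IsOpen D)
    (hchart : D ∩ ball (0 : EuclideanSpace ℝ (Fin (n + 1))) Rh
      = {y ∈ ball (0 : EuclideanSpace ℝ (Fin (n + 1))) Rh | Ψ (tilde y) < vert y})
    (w : EuclideanSpace ℝ (Fin n)) (hw : ‖w‖ < Rh / 2) :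
    (show EuclideanSpace ℝ (Fin (n+1)) from WithLp.toLp 2 (Fin.snoc w.ofLp (Ψ w))) ∈ frontier D := by
  set q : EuclideanSpace ℝ (Fin (n+1)) := WithLp.toLp 2 (Fin.snoc w.ofLp (Ψ w)) with hqdef
  have hΨw : |Ψ w| ≤ 1/2 * ‖w‖ :=
    psi_val hΛ hRh hRh1 hΨdiff hΨ0 hgrad0 hgradlip w (by linarith)
  have hqsq : ‖q‖^2 = ‖w‖^2 + (Ψ w)^2 := by
    rw [norm_split q, hqdef, tilde_snoc, vert_snoc]
  have hqn : ‖q‖ < Rh := by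
    nlinarith [hqsq, sq_abs (Ψ w), mul_self_le_mul_self (abs_nonneg (Ψ w)) hΨw,
      mul_self_lt_mul_self (norm_nonneg w) hw, norm_nonneg q, hRh, norm_nonneg w]
  have hqnotD : q ∉ D := by
    intro hqD
    have hqmem : q ∈ D ∩ ball (0 : EuclideanSpace ℝ (Fin (n+1))) Rh :=
      ⟨hqD, by rwa [mem_ball_zero_iff]⟩
    rw [hchart] at hqmem
    have := hqmem.2
    rw [hqdef, tilde_snoc, vert_snoc] at this
    exact lt_irrefl _ this
  have hqcl : q ∈ closure D := by
    rw [Metric.mem_closure_iff]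
    intro ε hε
    set δ : ℝ := min (ε/2) ((Rh - ‖q‖)/2) with hδdef
    have hδpos : 0 < δ := lt_min (by linarith) (by linarith)
    set p : EuclideanSpace ℝ (Fin (n+1)) := WithLp.toLp 2 (Fin.snoc w.ofLp (Ψ w + δ)) with hpdef
    have hpq : ‖p - q‖ = δ := by
      have h1 : tilde (p - q) = 0 := by
        rw [tilde_sub, hpdef, hqdef, tilde_snoc, tilde_snoc, sub_self]
      have h2 : vert (p - q) = δ := by
        rw [vert_sub, hpdef, hqdef, vert_snoc, vert_snoc]; ring
      have h3 : ‖p - q‖^2 = δ^2 := by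
        rw [norm_split (p - q), h1, h2, norm_zero]; ring
      exact eq_of_sq_eq (norm_nonneg _) hδpos.le h3
    have hpball : p ∈ ball (0 : EuclideanSpace ℝ (Fin (n+1))) Rh := by
      rw [mem_ball_zero_iff]
      have : ‖p‖ ≤ ‖q‖ + ‖p - q‖ := by
        have hqp : q + (p - q) = p := by abel
        calc ‖p‖ = ‖q + (p - q)‖ := by rw [hqp]
        _ ≤ ‖q‖ + ‖p - q‖ := norm_add_le _ _
      have hδ2 : δ ≤ (Rh - ‖q‖)/2 := min_le_right _ _
      rw [hpq] at this
      linarith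
    have hpD : p ∈ D := by
      have : p ∈ {y ∈ ball (0 : EuclideanSpace ℝ (Fin (n+1))) Rh | Ψ (tilde y) < vert y} := by
        refine ⟨hpball, ?_⟩
        rw [hpdef, tilde_snoc, vert_snoc]
        linarith
      rw [← hchart] at this
      exact this.1
    refine ⟨p, hpD, ?_⟩
    rw [dist_eq_norm, norm_sub_rev, hpq]
    calc δ ≤ ε/2 := min_le_left _ _
    _ < ε := by linarith
  rw [frontier, hDopen.interior_eq]
  exact ⟨hqcl, hqnotD⟩

lemma rho_frontier_zero (hΨdiff : Differentiable ℝ Ψ)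
    (hDopen : IsOpen D)
    (hchart : D ∩ ball (0 : EuclideanSpace ℝ (Fin (n + 1))) Rh
      = {y ∈ ball (0 : EuclideanSpace ℝ (Fin (n + 1))) Rh | Ψ (tilde y) < vert y})
    {q : EuclideanSpace ℝ (Fin (n+1))} (hq : q ∈ frontier D) (hqRh : ‖q‖ < Rh) :
    vrho Ψ q = 0 := by
  have hρcont : Continuous (vrho Ψ) :=
    (vert_lip.continuous).sub (hΨdiff.continuous.comp tilde_lip.continuous)
  have hqcl : q ∈ closure D := hq.1
  have hqnotD : q ∉ D := by
    intro hqD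
    rw [frontier, hDopen.interior_eq] at hq
    exact hq.2 hqD
  have hle : vrho Ψ q ≤ 0 := by
    by_contra hpos
    push_neg at hpos
    have : q ∈ {y ∈ ball (0 : EuclideanSpace ℝ (Fin (n+1))) Rh | Ψ (tilde y) < vert y} := by
      refine ⟨by rwa [mem_ball_zero_iff], ?_⟩
      have : 0 < vert q - Ψ (tilde q) := hpos
      linarith
    rw [← hchart] at this
    exact hqnotD this.1
  have hge : 0 ≤ vrho Ψ q := by
    have hmem : q ∈ ball (0 : EuclideanSpace ℝ (Fin (n+1))) Rh ∩ closure D :=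
      ⟨by rwa [mem_ball_zero_iff], hqcl⟩
    have hsub := isOpen_ball.inter_closure (s := ball (0 : EuclideanSpace ℝ (Fin (n+1))) Rh)
      (t := D)
    have hq2 : q ∈ closure (ball (0 : EuclideanSpace ℝ (Fin (n+1))) Rh ∩ D) := hsub hmem
    have hsub2 : ball (0 : EuclideanSpace ℝ (Fin (n+1))) Rh ∩ D ⊆ {x | 0 ≤ vrho Ψ x} := by
      intro x hx
      have : x ∈ D ∩ ball (0 : EuclideanSpace ℝ (Fin (n+1))) Rh := ⟨hx.2, hx.1⟩
      rw [hchart] at this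
      have h2 := this.2
      show 0 ≤ vert x - Ψ (tilde x)
      linarith
    have hclosed : IsClosed {x : EuclideanSpace ℝ (Fin (n+1)) | 0 ≤ vrho Ψ x} :=
      isClosed_le continuous_const hρcont
    have := closure_mono hsub2 hq2
    rwa [hclosed.closure_eq] at this
  linarith

end Geometry2

section Geometry3

variable {n : ℕ} {Λ Rh : ℝ} {Ψ : EuclideanSpace ℝ (Fin n) → ℝ}
  {D : Set (EuclideanSpace ℝ (Fin (n+1)))}

lemma delta_le_rho (hΛ : 0 < Λ) (hRh : 0 < Rh) (hRh1 : Rh ≤ min 1 (1 / (2 * Λ)))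
    (hΨdiff : Differentiable ℝ Ψ) (hΨ0 : Ψ 0 = 0) (hgrad0 : fderiv ℝ Ψ 0 = 0)
    (hgradlip : ∀ y z : EuclideanSpace ℝ (Fin n),
      ‖fderiv ℝ Ψ y - fderiv ℝ Ψ z‖ ≤ Λ * ‖y - z‖)
    (hDopen : IsOpen D)
    (hchart : D ∩ ball (0 : EuclideanSpace ℝ (Fin (n + 1))) Rh
      = {y ∈ ball (0 : EuclideanSpace ℝ (Fin (n + 1))) Rh | Ψ (tilde y) < vert y})
    (x : EuclideanSpace ℝ (Fin (n+1))) (hx1 : ‖tilde x‖ < Rh/2) (hx2 : 0 ≤ vrho Ψ x) :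
    Metric.infDist x (frontier D) ≤ vrho Ψ x := by
  have hqf := graph_frontier hΛ hRh hRh1 hΨdiff hΨ0 hgrad0 hgradlip hDopen hchart
    (tilde x) hx1
  set q : EuclideanSpace ℝ (Fin (n+1)) := WithLp.toLp 2 (Fin.snoc (tilde x).ofLp (Ψ (tilde x))) with hqdef
  have hdist : dist x q = vrho Ψ x := by
    rw [dist_eq_norm]
    have h1 : tilde (x - q) = 0 := by
      rw [tilde_sub, hqdef, tilde_snoc, sub_self]
    have h2 : vert (x - q) = vrho Ψ x := by
      rw [vert_sub, hqdef, vert_snoc]; rfl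
    have h3 : ‖x - q‖^2 = (vrho Ψ x)^2 := by
      rw [norm_split (x - q), h1, h2, norm_zero]; ring
    exact eq_of_sq_eq (norm_nonneg _) hx2 h3
  calc Metric.infDist x (frontier D) ≤ dist x q := Metric.infDist_le_dist_of_mem hqf
  _ = vrho Ψ x := hdist

lemma rho_le_delta (hΛ : 0 < Λ) (hRh : 0 < Rh) (hRh1 : Rh ≤ min 1 (1 / (2 * Λ)))
    (hΨdiff : Differentiable ℝ Ψ) (hΨ0 : Ψ 0 = 0) (hgrad0 : fderiv ℝ Ψ 0 = 0)
    (hgradlip : ∀ y z : EuclideanSpace ℝ (Fin n),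
      ‖fderiv ℝ Ψ y - fderiv ℝ Ψ z‖ ≤ Λ * ‖y - z‖)
    (hDopen : IsOpen D)
    (h0 : (0 : EuclideanSpace ℝ (Fin (n + 1))) ∈ frontier D)
    (hchart : D ∩ ball (0 : EuclideanSpace ℝ (Fin (n + 1))) Rh
      = {y ∈ ball (0 : EuclideanSpace ℝ (Fin (n + 1))) Rh | Ψ (tilde y) < vert y})
    (x : EuclideanSpace ℝ (Fin (n+1))) (hx : ‖x‖ ≤ Rh/8) :
    2/3 * vrho Ψ x ≤ Metric.infDist x (frontier D) := by
  apply le_infDist_of_forall ⟨0, h0⟩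
  intro q hq
  have hpsix : |Ψ (tilde x)| ≤ 1/2 * ‖tilde x‖ :=
    psi_val hΛ hRh hRh1 hΨdiff hΨ0 hgrad0 hgradlip (tilde x)
      (le_trans (norm_tilde_le x) (by linarith))
  have htx : ‖tilde x‖ ≤ ‖x‖ := norm_tilde_le x
  have hvx : |vert x| ≤ ‖x‖ := abs_vert_le x
  rcases le_or_gt Rh ‖q‖ with hqn | hqn
  · -- far boundary point
    have hd : Rh - Rh/8 ≤ dist x q := by
      rw [dist_eq_norm]
      have h1 : ‖q‖ - ‖x‖ ≤ ‖x - q‖ := by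
        rw [norm_sub_rev]
        exact le_trans (by linarith [abs_norm_sub_norm_le q x, le_abs_self (‖q‖ - ‖x‖)])
          le_rfl
      linarith
    have hρ : vrho Ψ x ≤ 3/2 * ‖x‖ := by
      have : vrho Ψ x = vert x - Ψ (tilde x) := rfl
      have h2 : vert x ≤ ‖x‖ := le_trans (le_abs_self _) hvx
      have h3 : -Ψ (tilde x) ≤ 1/2 * ‖tilde x‖ := by
        have := neg_abs_le (Ψ (tilde x)); linarith
      nlinarith
    nlinarith [hRh]
  · have hρq : vrho Ψ q = 0 := rho_frontier_zero hΨdiff hDopen hchart hq hqn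
    have hdq : dist x q = ‖x - q‖ := dist_eq_norm _ _
    have hvert : |vert x - vert q| ≤ ‖x - q‖ := by
      rw [← vert_sub]; exact abs_vert_le _
    have htil : ‖tilde x - tilde q‖ ≤ ‖x - q‖ := by
      rw [← tilde_sub]; exact norm_tilde_le _
    have hpsi : |Ψ (tilde x) - Ψ (tilde q)| ≤ 1/2 * ‖tilde x - tilde q‖ :=
      psi_lip hΛ hRh hRh1 hΨdiff hgrad0 hgradlip (tilde x) (tilde q)
        (le_trans htx (by linarith)) (le_trans (norm_tilde_le q) hqn.le)
    have hkey : vrho Ψ x - vrho Ψ q ≤ 3/2 * ‖x - q‖ := by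
      have e1 : vrho Ψ x - vrho Ψ q = (vert x - vert q) - (Ψ (tilde x) - Ψ (tilde q)) := by
        simp only [vrho]; ring
      have e2 : vert x - vert q ≤ |vert x - vert q| := le_abs_self _
      have e3 : -(Ψ (tilde x) - Ψ (tilde q)) ≤ |Ψ (tilde x) - Ψ (tilde q)| := neg_le_abs _
      nlinarith
    rw [hρq, sub_zero] at hkey
    rw [hdq]
    linarith [norm_nonneg (x - q)]

end Geometry3

section GeomPack

variable {n : ℕ} {Λ Rh : ℝ} {Ψ : EuclideanSpace ℝ (Fin n) → ℝ}
  {D : Set (EuclideanSpace ℝ (Fin (n+1)))}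

set_option maxHeartbeats 2000000 in
/-- All the geometric facts needed in the main proof. -/
lemma geom_pack (hΛ : 0 < Λ) (hRh : 0 < Rh) (hRh1 : Rh ≤ min 1 (1 / (2 * Λ)))
    (hΨdiff : Differentiable ℝ Ψ) (hΨ0 : Ψ 0 = 0) (hgrad0 : fderiv ℝ Ψ 0 = 0)
    (hgradlip : ∀ y z : EuclideanSpace ℝ (Fin n),
      ‖fderiv ℝ Ψ y - fderiv ℝ Ψ z‖ ≤ Λ * ‖y - z‖)
    (hDopen : IsOpen D)
    (h0 : (0 : EuclideanSpace ℝ (Fin (n + 1))) ∈ frontier D)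
    (hchart : D ∩ ball (0 : EuclideanSpace ℝ (Fin (n + 1))) Rh
      = {y ∈ ball (0 : EuclideanSpace ℝ (Fin (n + 1))) Rh | Ψ (tilde y) < vert y})
    {r : ℝ} (hr : 0 < r) (hrR : r ≤ Rh/8)
    {z y : EuclideanSpace ℝ (Fin (n+1))}
    (hz : z ∈ Ubox n Ψ D (r/2) (r/2)) (hy : y ∈ D \ Ubox n Ψ D r r) :
    ‖z‖ ≤ r ∧ r/2 ≤ ‖y‖ ∧ r/3 ≤ ‖z - y‖ ∧ ‖y‖ ≤ 12*‖z-y‖ ∧ ‖z-y‖ ≤ 12*‖y‖ ∧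
      0 < Metric.infDist z (frontier D) ∧
      Metric.infDist z (frontier D) ≤ vrho Ψ z ∧
      2/3 * vrho Ψ z ≤ Metric.infDist z (frontier D) ∧
      0 < Metric.infDist y (frontier D) ∧
      Metric.infDist y (frontier D) ≤ ‖y‖ := by
  obtain ⟨hzD, hz1, hz2, hz3⟩ := hz
  obtain ⟨hyD, hyU⟩ := hy
  have hfne : (frontier D).Nonempty := ⟨0, h0⟩
  have psival := psi_val hΛ hRh hRh1 hΨdiff hΨ0 hgrad0 hgradlip
  have psilip := psi_lip hΛ hRh hRh1 hΨdiff hgrad0 hgradlip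
  -- ‖z‖ ≤ r
  have hpsz : |Ψ (tilde z)| ≤ 1/2 * ‖tilde z‖ := psival (tilde z) (by linarith)
  have hvz : vert z = vrho Ψ z + Ψ (tilde z) := by simp [vrho]
  have hvzabs : |vert z| ≤ r/2 + 1/2 * ‖tilde z‖ := by
    rw [hvz]
    calc |vrho Ψ z + Ψ (tilde z)| ≤ |vrho Ψ z| + |Ψ (tilde z)| := abs_add_le _ _
    _ ≤ r/2 + 1/2 * ‖tilde z‖ := by
        have : |vrho Ψ z| = vrho Ψ z := abs_of_pos hz2
        rw [this]; linarith
  have hznorm : ‖z‖ ≤ r := by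
    have hsq := norm_split z
    nlinarith [norm_nonneg z, norm_nonneg (tilde z), sq_abs (vert z),
      mul_self_le_mul_self (abs_nonneg (vert z)) hvzabs,
      mul_self_le_mul_self (norm_nonneg (tilde z)) hz1.le, hr]
  -- r/2 ≤ ‖y‖
  have hYnorm : r/2 ≤ ‖y‖ := by
    by_contra hcon
    push_neg at hcon
    have htly : ‖tilde y‖ ≤ ‖y‖ := norm_tilde_le y
    have hvly : |vert y| ≤ ‖y‖ := abs_vert_le y
    have hyball : y ∈ ball (0 : EuclideanSpace ℝ (Fin (n+1))) Rh := by
      rw [mem_ball_zero_iff]; linarith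
    have hychart : Ψ (tilde y) < vert y := by
      have : y ∈ D ∩ ball (0 : EuclideanSpace ℝ (Fin (n+1))) Rh := ⟨hyD, hyball⟩
      rw [hchart] at this; exact this.2
    have hpsy : |Ψ (tilde y)| ≤ 1/2 * ‖tilde y‖ := psival (tilde y) (by linarith)
    refine hyU ⟨hyD, by linarith, by simp only [vrho]; linarith, ?_⟩
    have : vrho Ψ y = vert y - Ψ (tilde y) := rfl
    have h2 : vert y ≤ ‖y‖ := le_trans (le_abs_self _) hvly
    have h3 : -Ψ (tilde y) ≤ 1/2 * ‖tilde y‖ := by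
      have := neg_abs_le (Ψ (tilde y)); linarith
    rw [this]; linarith
  -- lower bound on ‖z - y‖
  have hzy3 : r/3 ≤ ‖z - y‖ := by
    rcases le_or_gt (4*r) ‖y‖ with h4r | h4r
    · have h1 : ‖y‖ - ‖z‖ ≤ ‖z - y‖ := by
        rw [norm_sub_rev]
        linarith [abs_norm_sub_norm_le y z, le_abs_self (‖y‖ - ‖z‖)]
      linarith
    · have hyball : y ∈ ball (0 : EuclideanSpace ℝ (Fin (n+1))) Rh := by
        rw [mem_ball_zero_iff]; linarith
      have hychart : Ψ (tilde y) < vert y := by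
        have : y ∈ D ∩ ball (0 : EuclideanSpace ℝ (Fin (n+1))) Rh := ⟨hyD, hyball⟩
        rw [hchart] at this; exact this.2
      have hρy : 0 < vrho Ψ y := by simp only [vrho]; linarith
      have hnot : ¬(‖tilde y‖ < r ∧ vrho Ψ y < r) := by
        rintro ⟨ha, hb⟩
        exact hyU ⟨hyD, ha, hρy, hb⟩
      rcases not_and_or.mp hnot with hcase | hcase
      · push_neg at hcase
        have h1 : ‖tilde y‖ - ‖tilde z‖ ≤ ‖tilde z - tilde y‖ := by
          rw [norm_sub_rev]
          linarith [abs_norm_sub_norm_le (tilde y) (tilde z),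
            le_abs_self (‖tilde y‖ - ‖tilde z‖)]
        have h2 : ‖tilde z - tilde y‖ ≤ ‖z - y‖ := by
          rw [← tilde_sub]; exact norm_tilde_le _
        linarith
      · push_neg at hcase
        have hvert : |vert y - vert z| ≤ ‖y - z‖ := by
          rw [← vert_sub]; exact abs_vert_le _
        have htil : ‖tilde y - tilde z‖ ≤ ‖y - z‖ := by
          rw [← tilde_sub]; exact norm_tilde_le _
        have hpsi : |Ψ (tilde y) - Ψ (tilde z)| ≤ 1/2 * ‖tilde y - tilde z‖ :=
          psilip (tilde y) (tilde z)
            (le_trans (norm_tilde_le y) (by linarith))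
            (le_trans (norm_tilde_le z) (by linarith))
        have hkey : vrho Ψ y - vrho Ψ z ≤ 3/2 * ‖y - z‖ := by
          have e1 : vrho Ψ y - vrho Ψ z = (vert y - vert z) - (Ψ (tilde y) - Ψ (tilde z)) := by
            simp only [vrho]; ring
          have e2 : vert y - vert z ≤ |vert y - vert z| := le_abs_self _
          have e3 : -(Ψ (tilde y) - Ψ (tilde z)) ≤ |Ψ (tilde y) - Ψ (tilde z)| := neg_le_abs _
          nlinarith
        rw [norm_sub_rev]
        linarith
  -- ‖y‖ ≤ 12 ‖z-y‖
  have hY12 : ‖y‖ ≤ 12*‖z-y‖ := by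
    rcases le_or_gt (4*r) ‖y‖ with h4r | h4r
    · have h1 : ‖y‖ - ‖z‖ ≤ ‖z - y‖ := by
        rw [norm_sub_rev]
        linarith [abs_norm_sub_norm_le y z, le_abs_self (‖y‖ - ‖z‖)]
      linarith
    · linarith
  have h12Y : ‖z-y‖ ≤ 12*‖y‖ := by
    have := norm_sub_le z y
    linarith
  -- infDist facts
  have hznf : z ∉ frontier D := by
    intro hf
    rw [frontier, hDopen.interior_eq] at hf
    exact hf.2 hzD
  have hynf : y ∉ frontier D := by
    intro hf
    rw [frontier, hDopen.interior_eq] at hf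
    exact hf.2 hyD
  have haz : 0 < Metric.infDist z (frontier D) :=
    (IsClosed.notMem_iff_infDist_pos isClosed_frontier hfne).mp hznf
  have hay : 0 < Metric.infDist y (frontier D) :=
    (IsClosed.notMem_iff_infDist_pos isClosed_frontier hfne).mp hynf
  have hzup : Metric.infDist z (frontier D) ≤ vrho Ψ z :=
    delta_le_rho hΛ hRh hRh1 hΨdiff hΨ0 hgrad0 hgradlip hDopen hchart z
      (by linarith) hz2.le
  have hzlow : 2/3 * vrho Ψ z ≤ Metric.infDist z (frontier D) :=
    rho_le_delta hΛ hRh hRh1 hΨdiff hΨ0 hgrad0 hgradlip hDopen h0 hchart z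
      (by linarith)
  have hyup : Metric.infDist y (frontier D) ≤ ‖y‖ := by
    have := Metric.infDist_le_dist_of_mem (x := y) h0
    rwa [dist_zero_right] at this
  exact ⟨hznorm, hYnorm, hzy3, hY12, h12Y, haz, hzup, hzlow, hay, hyup⟩

end GeomPack

end


set_option maxHeartbeats 2000000 in
theorem stmt_17 {n : ℕ} (hn : 1 ≤ n) (α : ℝ) (hα : 0 < α) (hα2 : α < 2)
    (Λ Rh : ℝ) (hΛ : 0 < Λ) (hRh : 0 < Rh) (hRh1 : Rh ≤ min 1 (1 / (2 * Λ)))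
    (Ψ : EuclideanSpace ℝ (Fin n) → ℝ) (hΨdiff : Differentiable ℝ Ψ) (hΨ0 : Ψ 0 = 0)
    (hgrad0 : fderiv ℝ Ψ 0 = 0)
    (hgradlip : ∀ y z : EuclideanSpace ℝ (Fin n),
      ‖fderiv ℝ Ψ y - fderiv ℝ Ψ z‖ ≤ Λ * ‖y - z‖)
    (D : Set (EuclideanSpace ℝ (Fin (n + 1)))) (hDopen : IsOpen D)
    (h0 : (0 : EuclideanSpace ℝ (Fin (n + 1))) ∈ frontier D)
    (hchart : D ∩ ball (0 : EuclideanSpace ℝ (Fin (n + 1))) Rh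
      = {y ∈ ball (0 : EuclideanSpace ℝ (Fin (n + 1))) Rh | Ψ (tilde y) < vert y})
    (Φ₁ Φ₂ ℓ : ℝ → ℝ)
    (hΦ₁meas : Measurable Φ₁) (hΦ₁pos : ∀ r : ℝ, 0 < r → 0 < Φ₁ r)
    (hΦ₁one : ∀ r : ℝ, 1 ≤ r → Φ₁ r = 1)
    (b₁ B₁ c₁L c₁U : ℝ) (hb₁ : 0 ≤ b₁) (hbB₁ : b₁ ≤ B₁) (hc₁L : 0 < c₁L) (hc₁U : 0 < c₁U)
    (hΦ₁scale : ∀ r s : ℝ, 0 < s → s ≤ r → r ≤ 1 →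
      c₁L * (r / s) ^ b₁ ≤ Φ₁ r / Φ₁ s ∧ Φ₁ r / Φ₁ s ≤ c₁U * (r / s) ^ B₁)
    (hΦ₂meas : Measurable Φ₂) (hΦ₂pos : ∀ r : ℝ, 0 < r → 0 < Φ₂ r)
    (hΦ₂one : ∀ r : ℝ, 1 ≤ r → Φ₂ r = 1)
    (b₂ B₂ c₂L c₂U : ℝ) (hb₂ : 0 ≤ b₂) (hbB₂ : b₂ ≤ B₂) (hc₂L : 0 < c₂L) (hc₂U : 0 < c₂U)
    (hΦ₂scale : ∀ r s : ℝ, 0 < s → s ≤ r → r ≤ 1 →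
      c₂L * (r / s) ^ b₂ ≤ Φ₂ r / Φ₂ s ∧ Φ₂ r / Φ₂ s ≤ c₂U * (r / s) ^ B₂)
    (hℓmeas : Measurable ℓ) (hℓpos : ∀ r : ℝ, 0 < r → 0 < ℓ r)
    (hℓone : ∀ r : ℝ, 1 ≤ r → ℓ r = 1)
    (hℓscale : ∀ ε : ℝ, 0 < ε → ∃ c > 1, ∀ r s : ℝ, 0 < s → s ≤ r → r ≤ 1 →
      c⁻¹ * (r / s) ^ (-min ε (lowerMatIdx Φ₁)) ≤ ℓ r / ℓ s ∧
        ℓ r / ℓ s ≤ c * (r / s) ^ min ε (lowerMatIdx Φ₂))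
    (B : EuclideanSpace ℝ (Fin (n + 1)) → EuclideanSpace ℝ (Fin (n + 1)) → ℝ)
    (hBmeas : Measurable (Function.uncurry B))
    (hBpos : ∀ x ∈ D, ∀ y ∈ D, 0 < B x y)
    (CB : ℝ) (hCB : 1 ≤ CB)
    (hB4c : ∀ x ∈ D, ∀ y ∈ D, x ≠ y →
      CB⁻¹ * (Φ₁ (min (infDist x (frontier D)) (infDist y (frontier D)) / ‖x - y‖)
          * Φ₂ (max (infDist x (frontier D)) (infDist y (frontier D)) / ‖x - y‖)
          * ℓ (min (infDist x (frontier D)) (infDist y (frontier D))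
              / min (max (infDist x (frontier D)) (infDist y (frontier D))) ‖x - y‖))
        ≤ B x y ∧
      B x y ≤ CB * (Φ₁ (min (infDist x (frontier D)) (infDist y (frontier D)) / ‖x - y‖)
          * Φ₂ (max (infDist x (frontier D)) (infDist y (frontier D)) / ‖x - y‖)
          * ℓ (min (infDist x (frontier D)) (infDist y (frontier D))
              / min (max (infDist x (frontier D)) (infDist y (frontier D))) ‖x - y‖))) :
    (∃ C > 0, ∀ r : ℝ, 0 < r → r ≤ Rh / 8 →
      ∀ z ∈ Ubox n Ψ D (r / 2) (r / 2) \ Ubox n Ψ D (r / 2) (r / 8),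
      ∀ y ∈ D \ Ubox n Ψ D r r,
        C * kfun n D Φ₁ Φ₂ ℓ α r y ≤ B z y * ‖z - y‖ ^ (-(n + 1 : ℝ) - α)) ∧
    (∀ ε : ℝ, max (lowerMatIdx Φ₁ - lowerMatIdx Φ₂) 0 < ε → ∃ C > 0,
      ∀ r : ℝ, 0 < r → r ≤ Rh / 8 →
      ∀ z ∈ Ubox n Ψ D (r / 2) (r / 2), ∀ y ∈ D \ Ubox n Ψ D r r,
        B z y * ‖z - y‖ ^ (-(n + 1 : ℝ) - α)
          ≤ C * (infDist z (frontier D) / r) ^ (lowerMatIdx Φ₁ - ε)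
            * kfun n D Φ₁ Φ₂ ℓ α r y) := by
  have hCB0 : (0:ℝ) < CB := lt_of_lt_of_le one_pos hCB
  have hsc₁L : ∀ r s : ℝ, 0 < s → s ≤ r → r ≤ 1 → c₁L * (r/s) ^ b₁ ≤ Φ₁ r / Φ₁ s :=
    fun r s hs hsr hr1 => (hΦ₁scale r s hs hsr hr1).1
  have hsc₁U : ∀ r s : ℝ, 0 < s → s ≤ r → r ≤ 1 → Φ₁ r / Φ₁ s ≤ c₁U * (r/s) ^ B₁ :=
    fun r s hs hsr hr1 => (hΦ₁scale r s hs hsr hr1).2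
  have hsc₂L : ∀ r s : ℝ, 0 < s → s ≤ r → r ≤ 1 → c₂L * (r/s) ^ b₂ ≤ Φ₂ r / Φ₂ s :=
    fun r s hs hsr hr1 => (hΦ₂scale r s hs hsr hr1).1
  have hsc₂U : ∀ r s : ℝ, 0 < s → s ≤ r → r ≤ 1 → Φ₂ r / Φ₂ s ≤ c₂U * (r/s) ^ B₂ :=
    fun r s hs hsr hr1 => (hΦ₂scale r s hs hsr hr1).2
  obtain ⟨hβ₁0, hb₁β, hmem₁⟩ :=
    matIdx_lemma Φ₁ hΦ₁pos b₁ B₁ c₁L c₁U hb₁ hc₁L hc₁U hsc₁L hsc₁U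
  obtain ⟨hβ₂0, hb₂β, hmem₂⟩ :=
    matIdx_lemma Φ₂ hΦ₂pos b₂ B₂ c₂L c₂U hb₂ hc₂L hc₂U hsc₂L hsc₂U
  obtain ⟨M₁, hM₁, hcomp₁⟩ := comp_lemma Φ₁ hΦ₁pos hΦ₁one c₁L c₁U b₁ B₁ hc₁L hc₁U
    hsc₁L hsc₁U 144 (by norm_num)
  obtain ⟨M₂, hM₂, hcomp₂⟩ := comp_lemma Φ₂ hΦ₂pos hΦ₂one c₂L c₂U b₂ B₂ hc₂L hc₂U
    hsc₂L hsc₂U 144 (by norm_num)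
  obtain ⟨c₀, hc₀1, hsc₀⟩ := hℓscale 1 one_pos
  have hc₀0 : (0:ℝ) < c₀ := lt_trans one_pos hc₀1
  have hsc₀L : ∀ r s : ℝ, 0 < s → s ≤ r → r ≤ 1 →
      c₀⁻¹ * (r/s) ^ (-min 1 (lowerMatIdx Φ₁)) ≤ ℓ r / ℓ s :=
    fun r s hs hsr hr1 => (hsc₀ r s hs hsr hr1).1
  have hsc₀U : ∀ r s : ℝ, 0 < s → s ≤ r → r ≤ 1 →
      ℓ r / ℓ s ≤ c₀ * (r/s) ^ (min 1 (lowerMatIdx Φ₂)) :=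
    fun r s hs hsr hr1 => (hsc₀ r s hs hsr hr1).2
  obtain ⟨Mℓ, hMℓ, hcompℓ⟩ := comp_lemma ℓ hℓpos hℓone c₀⁻¹ c₀
    (-min 1 (lowerMatIdx Φ₁)) (min 1 (lowerMatIdx Φ₂)) (by positivity) hc₀0
    hsc₀L hsc₀U 144 (by norm_num)
  set κ := (12:ℝ) ^ ((n+1:ℝ)+α) with hκdef
  have hκ0 : 0 < κ := by rw [hκdef]; positivity
  have hn0 : (0:ℝ) ≤ (n:ℝ) := Nat.cast_nonneg n
  have hpneg : (-(n + 1 : ℝ) - α) ≤ 0 := by linarith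
  have hκp : κ = ((12:ℝ) ^ (-(n + 1 : ℝ) - α))⁻¹ := by
    rw [← Real.rpow_neg (by norm_num : (0:ℝ) ≤ 12)]
    rw [hκdef]
    congr 1
    ring
  have hpowc : ∀ u v : ℝ, 0 < u → 0 < v → u ≤ 12*v →
      v ^ (-(n + 1 : ℝ) - α) ≤ κ * u ^ (-(n + 1 : ℝ) - α) := by
    intro u v hu hv huv
    have h1 : u/12 ≤ v := by rw [div_le_iff₀ (by norm_num : (0:ℝ) < 12)]; linarith
    calc v ^ (-(n + 1 : ℝ) - α) ≤ (u/12) ^ (-(n + 1 : ℝ) - α) :=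
          Real.rpow_le_rpow_of_nonpos (by positivity) h1 hpneg
    _ = u ^ (-(n + 1 : ℝ) - α) / 12 ^ (-(n + 1 : ℝ) - α) :=
          Real.div_rpow hu.le (by norm_num) _
    _ = κ * u ^ (-(n + 1 : ℝ) - α) := by rw [hκp, div_eq_mul_inv, mul_comm]
  constructor
  · -- Part (i)
    refine ⟨(κ * (M₁*M₂*Mℓ) * CB)⁻¹, by positivity, ?_⟩
    intro r hr hrR z hzmem y hymem
    obtain ⟨hzU, hznot⟩ := hzmem
    obtain ⟨hznorm, hY2, hzy3, hY12, h12Y, haz, hzup, hzlow, hty, htyY⟩ :=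
      geom_pack hΛ hRh hRh1 hΨdiff hΨ0 hgrad0 hgradlip hDopen h0 hchart hr hrR hzU hymem
    obtain ⟨hzD, hz1, hz2, hz3⟩ := hzU
    obtain ⟨hyD, -⟩ := hymem
    have hρ8 : r/8 ≤ vrho Ψ z := by
      by_contra hcon
      push_neg at hcon
      exact hznot ⟨hzD, hz1, hz2, hcon⟩
    simp only [kfun]
    set a := Metric.infDist z (frontier D) with hadef
    set t := Metric.infDist y (frontier D) with htdef
    set Y := ‖y‖ with hYdef
    set h := ‖z - y‖ with hhdef
    have hYpos : 0 < Y := by linarith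
    have hhpos : 0 < h := by linarith
    have hr12a : r ≤ 12 * a := by linarith
    have har : a ≤ r := by linarith
    have hne : z ≠ y := by
      intro he
      rw [he, sub_self, norm_zero] at hhdef
      linarith
    have hBl := (hB4c z hzD y hyD hne).1
    have hminrt : 0 < min r t := lt_min hr hty
    have hmaxrt : 0 < max r t := lt_of_lt_of_le hr (le_max_left _ _)
    have hminat : 0 < min a t := lt_min haz hty
    have hmaxat : 0 < max a t := lt_of_lt_of_le haz (le_max_left _ _)
    have hd1 : 0 < min (max a t) h := lt_min hmaxat hhpos
    have hmin12 : min r t ≤ 12 * min a t := by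
      rcases le_total a t with hat | hat
      · rw [min_eq_left hat]
        have := min_le_left r t
        linarith
      · rw [min_eq_right hat]
        have := min_le_right r t
        linarith
    have hmin21 : min a t ≤ 12 * min r t := by
      have := min_le_min har (le_refl t)
      linarith
    have hmax12 : max r t ≤ 12 * max a t := by
      apply max_le
      · have := le_max_left a t; linarith
      · have := le_max_right a t; linarith
    have hmax21 : max a t ≤ 12 * max r t := by
      have := max_le_max har (le_refl t)
      linarith
    have hd2le : max r t ≤ 12 * min (max a t) h := by
      rcases le_total (max a t) h with hmh | hmh
      · rw [min_eq_left hmh]; exact hmax12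
      · rw [min_eq_right hmh]
        apply max_le
        · linarith
        · linarith
    have hd1le : min (max a t) h ≤ 12 * max r t := by
      have h1 : min (max a t) h ≤ max a t := min_le_left _ _
      linarith
    have hA1 : min r t / Y ≤ 144 * (min a t / h) := by
      calc min r t / Y ≤ (12*12) * (min a t / h) :=
            div_ratio_le hYpos hhpos hminat.le hmin12 h12Y (by norm_num) (by norm_num)
      _ = 144 * (min a t / h) := by norm_num
    have hA1' : min a t / h ≤ 144 * (min r t / Y) := by
      calc min a t / h ≤ (12*12) * (min r t / Y) :=
            div_ratio_le hhpos hYpos hminrt.le hmin21 hY12 (by norm_num) (by norm_num)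
      _ = 144 * (min r t / Y) := by norm_num
    have hA2 : max r t / Y ≤ 144 * (max a t / h) := by
      calc max r t / Y ≤ (12*12) * (max a t / h) :=
            div_ratio_le hYpos hhpos hmaxat.le hmax12 h12Y (by norm_num) (by norm_num)
      _ = 144 * (max a t / h) := by norm_num
    have hA2' : max a t / h ≤ 144 * (max r t / Y) := by
      calc max a t / h ≤ (12*12) * (max r t / Y) :=
            div_ratio_le hhpos hYpos hmaxrt.le hmax21 hY12 (by norm_num) (by norm_num)
      _ = 144 * (max r t / Y) := by norm_num
    have hA3 : min r t / max r t ≤ 144 * (min a t / min (max a t) h) := by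
      calc min r t / max r t ≤ (12*12) * (min a t / min (max a t) h) :=
            div_ratio_le hmaxrt hd1 hminat.le hmin12 hd1le (by norm_num) (by norm_num)
      _ = 144 * (min a t / min (max a t) h) := by norm_num
    have hA3' : min a t / min (max a t) h ≤ 144 * (min r t / max r t) := by
      calc min a t / min (max a t) h ≤ (12*12) * (min r t / max r t) :=
            div_ratio_le hd1 hmaxrt hminrt.le hmin21 hd2le (by norm_num) (by norm_num)
      _ = 144 * (min r t / max r t) := by norm_num
    have hΦ1c : Φ₁ (min r t / Y) ≤ M₁ * Φ₁ (min a t / h) :=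
      hcomp₁ _ _ (div_pos hminrt hYpos) (div_pos hminat hhpos) hA1 hA1'
    have hΦ2c : Φ₂ (max r t / Y) ≤ M₂ * Φ₂ (max a t / h) :=
      hcomp₂ _ _ (div_pos hmaxrt hYpos) (div_pos hmaxat hhpos) hA2 hA2'
    have hℓc : ℓ (min r t / max r t) ≤ Mℓ * ℓ (min a t / min (max a t) h) :=
      hcompℓ _ _ (div_pos hminrt hmaxrt) (div_pos hminat hd1) hA3 hA3'
    have hYp : Y ^ (-(n + 1 : ℝ) - α) ≤ κ * h ^ (-(n + 1 : ℝ) - α) :=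
      hpowc h Y hhpos hYpos h12Y
    have hΦB1 := hΦ₁pos _ (div_pos hminat hhpos)
    have hΦB2 := hΦ₂pos _ (div_pos hmaxat hhpos)
    have hℓB3 := hℓpos _ (div_pos hminat hd1)
    have hX_le : Φ₁ (min a t / h) * Φ₂ (max a t / h) * ℓ (min a t / min (max a t) h)
        ≤ CB * B z y := by
      calc Φ₁ (min a t / h) * Φ₂ (max a t / h) * ℓ (min a t / min (max a t) h)
          = CB * (CB⁻¹ * (Φ₁ (min a t / h) * Φ₂ (max a t / h)
            * ℓ (min a t / min (max a t) h))) := by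
            rw [← mul_assoc, mul_inv_cancel₀ (ne_of_gt hCB0), one_mul]
      _ ≤ CB * B z y := mul_le_mul_of_nonneg_left hBl hCB0.le
    have hfour : Y ^ (-(n + 1 : ℝ) - α) * Φ₁ (min r t / Y) * Φ₂ (max r t / Y)
        * ℓ (min r t / max r t)
        ≤ (κ * h ^ (-(n + 1 : ℝ) - α)) * (M₁ * Φ₁ (min a t / h))
          * (M₂ * Φ₂ (max a t / h)) * (Mℓ * ℓ (min a t / min (max a t) h)) :=
      mul_le_mul4 hYp hΦ1c hΦ2c hℓc (Real.rpow_nonneg hYpos.le _)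
        (hΦ₁pos _ (div_pos hminrt hYpos)).le (hΦ₂pos _ (div_pos hmaxrt hYpos)).le
        (hℓpos _ (div_pos hminrt hmaxrt)).le
    calc (κ * (M₁*M₂*Mℓ) * CB)⁻¹ * (Y ^ (-(n + 1 : ℝ) - α) * Φ₁ (min r t / Y)
        * Φ₂ (max r t / Y) * ℓ (min r t / max r t))
        ≤ (κ * (M₁*M₂*Mℓ) * CB)⁻¹ * ((κ * h ^ (-(n + 1 : ℝ) - α))
          * (M₁ * Φ₁ (min a t / h)) * (M₂ * Φ₂ (max a t / h))
          * (Mℓ * ℓ (min a t / min (max a t) h))) :=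
          mul_le_mul_of_nonneg_left hfour (by positivity)
    _ = ((κ * (M₁*M₂*Mℓ) * CB)⁻¹ * (κ * (M₁*M₂*Mℓ)))
        * ((Φ₁ (min a t / h) * Φ₂ (max a t / h) * ℓ (min a t / min (max a t) h))
          * h ^ (-(n + 1 : ℝ) - α)) := by ring
    _ ≤ ((κ * (M₁*M₂*Mℓ) * CB)⁻¹ * (κ * (M₁*M₂*Mℓ)))
        * ((CB * B z y) * h ^ (-(n + 1 : ℝ) - α)) := by
          apply mul_le_mul_of_nonneg_left _ (by positivity)
          exact mul_le_mul_of_nonneg_right hX_le (Real.rpow_nonneg hhpos.le _)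
    _ = ((κ * (M₁*M₂*Mℓ) * CB)⁻¹ * (κ * (M₁*M₂*Mℓ) * CB))
        * (B z y * h ^ (-(n + 1 : ℝ) - α)) := by ring
    _ = B z y * h ^ (-(n + 1 : ℝ) - α) := by
          rw [inv_mul_cancel₀ (by positivity), one_mul]
  · -- Part (ii)
    intro ε hε
    have hεβ : lowerMatIdx Φ₁ - lowerMatIdx Φ₂ < ε := lt_of_le_of_lt (le_max_left _ _) hε
    have hεpos : 0 < ε := lt_of_le_of_lt (le_max_right _ _) hε
    set β₁ := lowerMatIdx Φ₁ with hβ₁def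
    set β₂ := lowerMatIdx Φ₂ with hβ₂def
    set θ := (ε + β₂ - β₁)/2 with hθdef
    have hθpos : 0 < θ := by rw [hθdef]; linarith
    obtain ⟨a₁, ha₁, hsc₁γ⟩ := hmem₁ (β₁ - ε/2) (by linarith)
    obtain ⟨a₂, ha₂, hsc₂γ⟩ := hmem₂ (β₂ - θ) (by linarith)
    obtain ⟨N₁, hN₁, hdec₁⟩ := decay_lemma Φ₁ hΦ₁pos hΦ₁one a₁ (β₁ - ε/2) ha₁ hsc₁γ
      144 M₁ (by norm_num) hM₁ hcomp₁
    obtain ⟨N₂, hN₂, hdec₂⟩ := decay_lemma Φ₂ hΦ₂pos hΦ₂one a₂ (β₂ - θ) ha₂ hsc₂γ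
      144 M₂ (by norm_num) hM₂ hcomp₂
    obtain ⟨c₄, hc₄1, hsc₄⟩ := hℓscale (ε/4) (by positivity)
    have hc₄0 : (0:ℝ) < c₄ := lt_trans one_pos hc₄1
    obtain ⟨cθ, hcθ1, hscθ⟩ := hℓscale θ hθpos
    have hcθ0 : (0:ℝ) < cθ := lt_trans one_pos hcθ1
    set m₁ := min (ε/4) β₁ with hm₁def
    set m₂ := min θ β₂ with hm₂def
    have hm₁0 : 0 ≤ m₁ := le_min (by positivity) hβ₁0
    have hm₂0 : 0 ≤ m₂ := le_min hθpos.le hβ₂0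
    have hm₁ε : m₁ ≤ ε/4 := min_le_left _ _
    have hm₂θ : m₂ ≤ θ := min_le_left _ _
    have hsc₄L : ∀ r s : ℝ, 0 < s → s ≤ r → r ≤ 1 → c₄⁻¹ * (r/s) ^ (-m₁) ≤ ℓ r / ℓ s :=
      fun r s hs hsr hr1 => (hsc₄ r s hs hsr hr1).1
    have hscθU : ∀ r s : ℝ, 0 < s → s ≤ r → r ≤ 1 → ℓ r / ℓ s ≤ cθ * (r/s) ^ m₂ :=
      fun r s hs hsr hr1 => (hscθ r s hs hsr hr1).2
    obtain ⟨Nd, hNd, hdown⟩ := ell_down ℓ hℓpos hℓone c₄ m₁ hc₄0 hm₁0 hsc₄L 144 (by norm_num)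
    obtain ⟨Nu, hNu, hup⟩ := ell_up ℓ hℓpos hℓone cθ m₂ hcθ0 hm₂0 hscθU 144 (by norm_num)
    have hexp₁ : β₁ - ε ≤ (β₁ - ε/2) + -m₁ := by linarith
    have hexp₂ : β₁ - ε ≤ (β₂ - θ) + -m₂ := by rw [hθdef] at hm₂θ ⊢; linarith
    set DA := M₁ * (N₂ * (12:ℝ) ^ |β₂ - θ|) * (Nu * (2:ℝ) ^ m₂) with hDAdef
    set DB := (N₁ * (12:ℝ) ^ |β₁ - ε/2|) * (N₂ * (12:ℝ) ^ |β₂ - θ|) * (c₄ * cθ) with hDBdef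
    set DC := (N₁ * (12:ℝ) ^ |β₁ - ε/2|) * M₂ * (Nd + Mℓ) with hDCdef
    have hDA0 : 0 < DA := by rw [hDAdef]; positivity
    have hDB0 : 0 < DB := by rw [hDBdef]; positivity
    have hDC0 : 0 < DC := by rw [hDCdef]; positivity
    refine ⟨CB * κ * (DA + DB + DC), by positivity, ?_⟩
    intro r hr hrR z hzU y hymem
    obtain ⟨hznorm, hY2, hzy3, hY12, h12Y, haz, hzup, hzlow, hty, htyY⟩ :=
      geom_pack hΛ hRh hRh1 hΨdiff hΨ0 hgrad0 hgradlip hDopen h0 hchart hr hrR hzU hymem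
    obtain ⟨hzD, hz1, hz2, hz3⟩ := hzU
    obtain ⟨hyD, -⟩ := hymem
    simp only [kfun]
    set a := Metric.infDist z (frontier D) with hadef
    set t := Metric.infDist y (frontier D) with htdef
    set Y := ‖y‖ with hYdef
    set h := ‖z - y‖ with hhdef
    have hYpos : 0 < Y := by linarith
    have hhpos : 0 < h := by linarith
    have haR2 : a < r/2 := lt_of_le_of_lt hzup hz3
    have har : a ≤ r := by linarith
    have har0 : 0 < a/r := div_pos haz hr
    have har1 : a/r ≤ 1 := by rw [div_le_one hr]; linarith
    have hne : z ≠ y := by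
      intro he
      rw [he, sub_self, norm_zero] at hhdef
      linarith
    have hBu := (hB4c z hzD y hyD hne).2
    have hminrt : 0 < min r t := lt_min hr hty
    have hmaxrt : 0 < max r t := lt_of_lt_of_le hr (le_max_left _ _)
    have hminat : 0 < min a t := lt_min haz hty
    have hmaxat : 0 < max a t := lt_of_lt_of_le haz (le_max_left _ _)
    have hd1p : 0 < min (max a t) h := lt_min hmaxat hhpos
    have hΦB1 := hΦ₁pos _ (div_pos hminat hhpos)
    have hΦB2 := hΦ₂pos _ (div_pos hmaxat hhpos)
    have hℓB3 := hℓpos _ (div_pos hminat hd1p)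
    have hΦA1 := hΦ₁pos _ (div_pos hminrt hYpos)
    have hΦA2 := hΦ₂pos _ (div_pos hmaxrt hYpos)
    have hℓA3 := hℓpos _ (div_pos hminrt hmaxrt)
    have hratE : ∀ x w : ℝ, 0 < x → 0 < w → (x/h)/(w/Y) = (x/w)*(Y/h) := by
      intro x w hx hw
      field_simp
    have hYh12 : Y/h ≤ 12 := by rw [div_le_iff₀ hhpos]; linarith
    have h1Yh : (1:ℝ) ≤ 12*(Y/h) := by rw [← mul_div_assoc, one_le_div hhpos]; linarith
    have hRR : ∀ x w : ℝ, 0 < x → 0 < w →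
        ((x/h)/(w/Y) ≤ 12*(x/w) ∧ x/w ≤ 12*((x/h)/(w/Y))) := by
      intro x w hx hw
      constructor
      · rw [hratE x w hx hw]
        calc (x/w)*(Y/h) ≤ (x/w)*12 := mul_le_mul_of_nonneg_left hYh12 (by positivity)
        _ = 12*(x/w) := mul_comm _ _
      · rw [hratE x w hx hw]
        calc x/w = (x/w)*1 := (mul_one _).symm
        _ ≤ (x/w)*(12*(Y/h)) := mul_le_mul_of_nonneg_left h1Yh (by positivity)
        _ = 12*((x/w)*(Y/h)) := by ring
    have hrpowR : ∀ x w γ : ℝ, 0 < x → 0 < w →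
        ((x/h)/(w/Y)) ^ γ ≤ 12 ^ |γ| * (x/w) ^ γ := by
      intro x w γ hx hw
      exact rpow_ratio_le (by positivity) (by positivity) (by norm_num)
        (hRR x w hx hw).1 (hRR x w hx hw).2
    -- the key product bound, by cases
    have key : ∃ Dc : ℝ, 0 < Dc ∧ Dc ≤ DA + DB + DC ∧
        Φ₁ (min a t / h) * Φ₂ (max a t / h) * ℓ (min a t / min (max a t) h)
          ≤ Dc * (a/r) ^ (β₁ - ε)
            * (Φ₁ (min r t / Y) * Φ₂ (max r t / Y) * ℓ (min r t / max r t)) := by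
      rcases le_total t a with htA | htA
      · -- Case A : t ≤ a
        have htr : t ≤ r := le_trans htA har
        rw [min_eq_right htA, max_eq_left htA, min_eq_right htr, max_eq_left htr]
        have hF1 : Φ₁ (t/h) ≤ M₁ * Φ₁ (t/Y) := by
          apply hcomp₁ _ _ (div_pos hty hhpos) (div_pos hty hYpos)
          · calc t/h ≤ (12*12)*(t/Y) :=
                div_ratio_le hhpos hYpos hty.le (by linarith) hY12 (by norm_num) (by norm_num)
            _ = 144*(t/Y) := by norm_num
          · calc t/Y ≤ (12*12)*(t/h) :=
                div_ratio_le hYpos hhpos hty.le (by linarith) h12Y (by norm_num) (by norm_num)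
            _ = 144*(t/h) := by norm_num
        have hF2 : Φ₂ (a/h) ≤ (N₂ * (12:ℝ) ^ |β₂ - θ|) * (a/r) ^ (β₂ - θ) * Φ₂ (r/Y) := by
          have hv144 : r/Y ≤ 144 := by rw [div_le_iff₀ hYpos]; linarith
          have huv : a/h ≤ 144*(r/Y) := by
            calc a/h ≤ (12*12)*(r/Y) :=
                  div_ratio_le hhpos hYpos hr.le (by linarith) hY12 (by norm_num) (by norm_num)
            _ = 144*(r/Y) := by norm_num
          have hd := hdec₂ (a/h) (r/Y) (div_pos haz hhpos) (div_pos hr hYpos) hv144 huv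
          have hrp := hrpowR a r (β₂ - θ) haz hr
          calc Φ₂ (a/h) ≤ N₂ * ((a/h)/(r/Y)) ^ (β₂-θ) * Φ₂ (r/Y) := hd
          _ ≤ N₂ * ((12:ℝ) ^ |β₂-θ| * (a/r) ^ (β₂-θ)) * Φ₂ (r/Y) := by
              apply mul_le_mul_of_nonneg_right _ (hΦ₂pos _ (div_pos hr hYpos)).le
              exact mul_le_mul_of_nonneg_left hrp hN₂.le
          _ = (N₂ * (12:ℝ) ^ |β₂-θ|) * (a/r) ^ (β₂-θ) * Φ₂ (r/Y) := by ring
        have hminah : 0 < min a h := lt_min haz hhpos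
        have hminah2 : a/2 ≤ min a h := by
          rcases le_total a h with hm | hm
          · rw [min_eq_left hm]; linarith
          · rw [min_eq_right hm]; linarith
        have hF3 : ℓ (t / min a h) ≤ (Nu * (2:ℝ) ^ m₂) * (a/r) ^ (-m₂) * ℓ (t/r) := by
          have hvu : t/r ≤ t / min a h := by
            rw [div_le_div_iff₀ hr hminah]
            have h1 : min a h ≤ r := le_trans (min_le_left _ _) har
            linarith [mul_le_mul_of_nonneg_left h1 hty.le]
          have huK : t / min a h ≤ 144 := by
            rw [div_le_iff₀ hminah]
            linarith [hminah2, htA, hminah.le]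
          have hupp := hup (t / min a h) (t/r) (div_pos hty hr) hvu huK
          have hre : (t/(min a h))/(t/r) = r/(min a h) := by
            field_simp
          have hq1 : r/(min a h) ≤ (1*2)*(r/a) :=
            div_ratio_le hminah haz hr.le (by linarith) (by linarith) (by norm_num) (by norm_num)
          have hq2 : r/a ≤ (1*2)*(r/(min a h)) :=
            div_ratio_le haz hminah hr.le (by linarith) (by linarith [min_le_left a h, haz]) (by norm_num) (by norm_num)
          have hq : (r/(min a h)) ^ m₂ ≤ (2:ℝ) ^ |m₂| * (r/a) ^ m₂ :=
            rpow_ratio_le (by positivity) (by positivity) (by norm_num)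
              (by linarith [hq1]) (by linarith [hq2])
          rw [abs_of_nonneg hm₂0] at hq
          have hira : (r/a) ^ m₂ = (a/r) ^ (-m₂) := rpow_inv_ratio haz hr m₂
          calc ℓ (t / min a h) ≤ Nu * ((t/(min a h))/(t/r)) ^ m₂ * ℓ (t/r) := hupp
          _ = Nu * (r/(min a h)) ^ m₂ * ℓ (t/r) := by rw [hre]
          _ ≤ Nu * ((2:ℝ) ^ m₂ * (r/a) ^ m₂) * ℓ (t/r) := by
              apply mul_le_mul_of_nonneg_right _ (hℓpos _ (div_pos hty hr)).le
              exact mul_le_mul_of_nonneg_left hq hNu.le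
          _ = (Nu * (2:ℝ) ^ m₂) * (a/r) ^ (-m₂) * ℓ (t/r) := by rw [hira]; ring
        refine ⟨DA, hDA0, by linarith, ?_⟩
        calc Φ₁ (t/h) * Φ₂ (a/h) * ℓ (t / min a h)
            ≤ (M₁ * Φ₁ (t/Y)) * ((N₂ * (12:ℝ) ^ |β₂-θ|) * (a/r) ^ (β₂-θ) * Φ₂ (r/Y))
              * ((Nu * (2:ℝ) ^ m₂) * (a/r) ^ (-m₂) * ℓ (t/r)) :=
            mul_le_mul3 hF1 hF2 hF3 (hΦ₁pos _ (div_pos hty hhpos)).le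
              (hΦ₂pos _ (div_pos haz hhpos)).le (hℓpos _ (div_pos hty hminah)).le
        _ = DA * ((a/r) ^ (β₂-θ) * (a/r) ^ (-m₂))
            * (Φ₁ (t/Y) * Φ₂ (r/Y) * ℓ (t/r)) := by rw [hDAdef]; ring
        _ = DA * (a/r) ^ ((β₂-θ) + -m₂) * (Φ₁ (t/Y) * Φ₂ (r/Y) * ℓ (t/r)) := by
            rw [← Real.rpow_add har0]
        _ ≤ DA * (a/r) ^ (β₁ - ε) * (Φ₁ (t/Y) * Φ₂ (r/Y) * ℓ (t/r)) := by
            apply mul_le_mul_of_nonneg_right _ (le_of_lt (mul_pos (mul_pos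
              (hΦ₁pos _ (div_pos hty hYpos)) (hΦ₂pos _ (div_pos hr hYpos)))
              (hℓpos _ (div_pos hty hr))))
            apply mul_le_mul_of_nonneg_left _ hDA0.le
            exact Real.rpow_le_rpow_of_exponent_ge har0 har1 hexp₂
      · rcases le_total t r with htB | htB
        · -- Case B : a ≤ t ≤ r
          rw [min_eq_left htA, max_eq_right htA, min_eq_right htB, max_eq_left htB]
          have hat0 : 0 < a/t := div_pos haz hty
          have hat1 : a/t ≤ 1 := (div_le_one hty).mpr htA
          have htr0 : 0 < t/r := div_pos hty hr
          have htr1 : t/r ≤ 1 := (div_le_one hr).mpr htB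
          have hF1 : Φ₁ (a/h) ≤ (N₁ * (12:ℝ) ^ |β₁ - ε/2|) * (a/t) ^ (β₁ - ε/2)
              * Φ₁ (t/Y) := by
            have hv144 : t/Y ≤ 144 := by rw [div_le_iff₀ hYpos]; linarith
            have huv : a/h ≤ 144*(t/Y) := by
              calc a/h ≤ (12*12)*(t/Y) :=
                    div_ratio_le hhpos hYpos hty.le (by linarith) hY12 (by norm_num) (by norm_num)
              _ = 144*(t/Y) := by norm_num
            have hd := hdec₁ (a/h) (t/Y) (div_pos haz hhpos) (div_pos hty hYpos) hv144 huv
            have hrp := hrpowR a t (β₁ - ε/2) haz hty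
            calc Φ₁ (a/h) ≤ N₁ * ((a/h)/(t/Y)) ^ (β₁-ε/2) * Φ₁ (t/Y) := hd
            _ ≤ N₁ * ((12:ℝ) ^ |β₁-ε/2| * (a/t) ^ (β₁-ε/2)) * Φ₁ (t/Y) := by
                apply mul_le_mul_of_nonneg_right _ (hΦ₁pos _ (div_pos hty hYpos)).le
                exact mul_le_mul_of_nonneg_left hrp hN₁.le
            _ = (N₁ * (12:ℝ) ^ |β₁-ε/2|) * (a/t) ^ (β₁-ε/2) * Φ₁ (t/Y) := by ring
          have hF2 : Φ₂ (t/h) ≤ (N₂ * (12:ℝ) ^ |β₂ - θ|) * (t/r) ^ (β₂ - θ)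
              * Φ₂ (r/Y) := by
            have hv144 : r/Y ≤ 144 := by rw [div_le_iff₀ hYpos]; linarith
            have huv : t/h ≤ 144*(r/Y) := by
              calc t/h ≤ (12*12)*(r/Y) :=
                    div_ratio_le hhpos hYpos hr.le (by linarith) hY12 (by norm_num) (by norm_num)
              _ = 144*(r/Y) := by norm_num
            have hd := hdec₂ (t/h) (r/Y) (div_pos hty hhpos) (div_pos hr hYpos) hv144 huv
            have hrp := hrpowR t r (β₂ - θ) hty hr
            calc Φ₂ (t/h) ≤ N₂ * ((t/h)/(r/Y)) ^ (β₂-θ) * Φ₂ (r/Y) := hd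
            _ ≤ N₂ * ((12:ℝ) ^ |β₂-θ| * (t/r) ^ (β₂-θ)) * Φ₂ (r/Y) := by
                apply mul_le_mul_of_nonneg_right _ (hΦ₂pos _ (div_pos hr hYpos)).le
                exact mul_le_mul_of_nonneg_left hrp hN₂.le
            _ = (N₂ * (12:ℝ) ^ |β₂-θ|) * (t/r) ^ (β₂-θ) * Φ₂ (r/Y) := by ring
          have hminth : 0 < min t h := lt_min hty hhpos
          have hminth3 : t/3 ≤ min t h := by
            rcases le_total t h with hm | hm
            · rw [min_eq_left hm]; linarith
            · rw [min_eq_right hm]; linarith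
          have hupos : 0 < a / min t h := div_pos haz hminth
          have huat : a/t ≤ a / min t h := by
            rw [div_le_div_iff₀ hty hminth]
            linarith [mul_le_mul_of_nonneg_left (min_le_left t h) haz.le]
          have hl1 : ℓ (a / min t h) ≤ c₄ * (a/t) ^ (-m₁) := by
            rcases le_or_gt (a / min t h) 1 with hu1 | hu1
            · have hv := ell_val_up ℓ hℓpos hℓone c₄ m₁ hc₄0 hsc₄L hupos hu1
              have hmono : (a / min t h) ^ (-m₁) ≤ (a/t) ^ (-m₁) :=
                Real.rpow_le_rpow_of_nonpos hat0 huat (by linarith)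
              calc ℓ (a / min t h) ≤ c₄ * (a / min t h) ^ (-m₁) := hv
              _ ≤ c₄ * (a/t) ^ (-m₁) := mul_le_mul_of_nonneg_left hmono hc₄0.le
            · rw [hℓone _ hu1.le]
              have h1 : (1:ℝ) ≤ (a/t) ^ (-m₁) := by
                have := Real.rpow_le_rpow_of_exponent_ge hat0 hat1
                  (by linarith : -m₁ ≤ (0:ℝ))
                rwa [Real.rpow_zero] at this
              have h2 : (1:ℝ)*1 ≤ c₄ * (a/t) ^ (-m₁) :=
                mul_le_mul (by linarith) h1 zero_le_one (by linarith)
              linarith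
          have hl2 : cθ⁻¹ * (t/r) ^ m₂ ≤ ℓ (t/r) :=
            val_low_of_scaleU hℓpos hℓone hcθ0 hscθU htr0 htr1
          have hcancel : (t/r) ^ (-m₂) * (t/r) ^ m₂ = 1 := by
            rw [← Real.rpow_add htr0]
            norm_num
          have hF3 : ℓ (a / min t h)
              ≤ (c₄ * cθ) * ((a/t) ^ (-m₁) * (t/r) ^ (-m₂)) * ℓ (t/r) := by
            calc ℓ (a / min t h) ≤ c₄ * (a/t) ^ (-m₁) := hl1
            _ = (c₄ * cθ) * ((a/t) ^ (-m₁) * (t/r) ^ (-m₂)) * (cθ⁻¹ * (t/r) ^ m₂) := by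
                rw [show (c₄ * cθ) * ((a/t) ^ (-m₁) * (t/r) ^ (-m₂)) * (cθ⁻¹ * (t/r) ^ m₂)
                    = c₄ * (cθ * cθ⁻¹) * (a/t) ^ (-m₁) * ((t/r) ^ (-m₂) * (t/r) ^ m₂)
                    from by ring, hcancel, mul_inv_cancel₀ (ne_of_gt hcθ0)]
                ring
            _ ≤ (c₄ * cθ) * ((a/t) ^ (-m₁) * (t/r) ^ (-m₂)) * ℓ (t/r) := by
                apply mul_le_mul_of_nonneg_left hl2 (by positivity)
          have hmulrw : (a/t) ^ (β₁ - ε) * (t/r) ^ (β₁ - ε) = (a/r) ^ (β₁ - ε) := by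
            rw [← Real.mul_rpow hat0.le htr0.le]
            congr 1
            field_simp
          refine ⟨DB, hDB0, by linarith, ?_⟩
          calc Φ₁ (a/h) * Φ₂ (t/h) * ℓ (a / min t h)
              ≤ ((N₁ * (12:ℝ) ^ |β₁-ε/2|) * (a/t) ^ (β₁-ε/2) * Φ₁ (t/Y))
                * ((N₂ * (12:ℝ) ^ |β₂-θ|) * (t/r) ^ (β₂-θ) * Φ₂ (r/Y))
                * ((c₄ * cθ) * ((a/t) ^ (-m₁) * (t/r) ^ (-m₂)) * ℓ (t/r)) :=
              mul_le_mul3 hF1 hF2 hF3 (hΦ₁pos _ (div_pos haz hhpos)).le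
                (hΦ₂pos _ (div_pos hty hhpos)).le (hℓpos _ hupos).le
          _ = DB * (((a/t) ^ (β₁-ε/2) * (a/t) ^ (-m₁)) * ((t/r) ^ (β₂-θ) * (t/r) ^ (-m₂)))
              * (Φ₁ (t/Y) * Φ₂ (r/Y) * ℓ (t/r)) := by rw [hDBdef]; ring
          _ = DB * ((a/t) ^ ((β₁-ε/2) + -m₁) * (t/r) ^ ((β₂-θ) + -m₂))
              * (Φ₁ (t/Y) * Φ₂ (r/Y) * ℓ (t/r)) := by
              rw [← Real.rpow_add hat0, ← Real.rpow_add htr0]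
          _ ≤ DB * ((a/t) ^ (β₁ - ε) * (t/r) ^ (β₁ - ε))
              * (Φ₁ (t/Y) * Φ₂ (r/Y) * ℓ (t/r)) := by
              apply mul_le_mul_of_nonneg_right _ (le_of_lt (mul_pos (mul_pos
                (hΦ₁pos _ (div_pos hty hYpos)) (hΦ₂pos _ (div_pos hr hYpos)))
                (hℓpos _ (div_pos hty hr))))
              apply mul_le_mul_of_nonneg_left _ hDB0.le
              have e1 : (a/t) ^ ((β₁-ε/2) + -m₁) ≤ (a/t) ^ (β₁ - ε) :=
                Real.rpow_le_rpow_of_exponent_ge hat0 hat1 hexp₁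
              have e2 : (t/r) ^ ((β₂-θ) + -m₂) ≤ (t/r) ^ (β₁ - ε) :=
                Real.rpow_le_rpow_of_exponent_ge htr0 htr1 hexp₂
              exact mul_le_mul e1 e2 (by positivity) (by positivity)
          _ = DB * (a/r) ^ (β₁ - ε) * (Φ₁ (t/Y) * Φ₂ (r/Y) * ℓ (t/r)) := by rw [hmulrw]
        · -- Case C : r ≤ t
          rw [min_eq_left htA, max_eq_right htA, min_eq_left htB, max_eq_right htB]
          have hF1 : Φ₁ (a/h) ≤ (N₁ * (12:ℝ) ^ |β₁ - ε/2|) * (a/r) ^ (β₁ - ε/2)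
              * Φ₁ (r/Y) := by
            have hv144 : r/Y ≤ 144 := by rw [div_le_iff₀ hYpos]; linarith
            have huv : a/h ≤ 144*(r/Y) := by
              calc a/h ≤ (12*12)*(r/Y) :=
                    div_ratio_le hhpos hYpos hr.le (by linarith) hY12 (by norm_num) (by norm_num)
              _ = 144*(r/Y) := by norm_num
            have hd := hdec₁ (a/h) (r/Y) (div_pos haz hhpos) (div_pos hr hYpos) hv144 huv
            have hrp := hrpowR a r (β₁ - ε/2) haz hr
            calc Φ₁ (a/h) ≤ N₁ * ((a/h)/(r/Y)) ^ (β₁-ε/2) * Φ₁ (r/Y) := hd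
            _ ≤ N₁ * ((12:ℝ) ^ |β₁-ε/2| * (a/r) ^ (β₁-ε/2)) * Φ₁ (r/Y) := by
                apply mul_le_mul_of_nonneg_right _ (hΦ₁pos _ (div_pos hr hYpos)).le
                exact mul_le_mul_of_nonneg_left hrp hN₁.le
            _ = (N₁ * (12:ℝ) ^ |β₁-ε/2|) * (a/r) ^ (β₁-ε/2) * Φ₁ (r/Y) := by ring
          have hF2 : Φ₂ (t/h) ≤ M₂ * Φ₂ (t/Y) := by
            apply hcomp₂ _ _ (div_pos hty hhpos) (div_pos hty hYpos)
            · calc t/h ≤ (12*12)*(t/Y) :=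
                  div_ratio_le hhpos hYpos hty.le (by linarith) hY12 (by norm_num) (by norm_num)
              _ = 144*(t/Y) := by norm_num
            · calc t/Y ≤ (12*12)*(t/h) :=
                  div_ratio_le hYpos hhpos hty.le (by linarith) h12Y (by norm_num) (by norm_num)
              _ = 144*(t/h) := by norm_num
          have hminth : 0 < min t h := lt_min hty hhpos
          have hminth12 : t/12 ≤ min t h := by
            rcases le_total t h with hm | hm
            · rw [min_eq_left hm]; linarith
            · rw [min_eq_right hm]; linarith
          have hupos : 0 < a / min t h := div_pos haz hminth
          have hrt0 : 0 < r/t := div_pos hr hty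
          have hrt1 : r/t ≤ 1 := (div_le_one hty).mpr htB
          have hu12v : a / min t h ≤ 12 * (r/t) := by
            calc a / min t h ≤ (1*12)*(r/t) :=
                  div_ratio_le hminth hty hr.le (by linarith) (by linarith) (by norm_num) (by norm_num)
            _ = 12*(r/t) := by norm_num
          have hone_ra : (1:ℝ) ≤ (r/a) ^ m₁ :=
            Real.one_le_rpow ((one_le_div haz).mpr har) hm₁0
          have hl1 : ℓ (a / min t h) ≤ (Nd + Mℓ) * (r/a) ^ m₁ * ℓ (r/t) := by
            rcases le_or_gt (a / min t h) (r/t) with huv | huv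
            · have hdn := hdown (r/t) (a / min t h) hupos huv (by linarith)
              have hvu : (r/t)/(a / min t h) ≤ r/a := by
                have he : (r/t)/(a / min t h) = (r/a) * ((min t h)/t) := by
                  field_simp
                rw [he]
                have : (min t h)/t ≤ 1 := (div_le_one hty).mpr (min_le_left _ _)
                calc (r/a) * ((min t h)/t) ≤ (r/a) * 1 :=
                      mul_le_mul_of_nonneg_left this (by positivity)
                _ = r/a := mul_one _
              have hrm : ((r/t)/(a / min t h)) ^ m₁ ≤ (r/a) ^ m₁ :=
                Real.rpow_le_rpow (by positivity) hvu hm₁0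
              calc ℓ (a / min t h) ≤ Nd * ((r/t)/(a / min t h)) ^ m₁ * ℓ (r/t) := hdn
              _ ≤ Nd * (r/a) ^ m₁ * ℓ (r/t) := by
                  apply mul_le_mul_of_nonneg_right _ (hℓpos _ hrt0).le
                  exact mul_le_mul_of_nonneg_left hrm hNd.le
              _ ≤ (Nd + Mℓ) * (r/a) ^ m₁ * ℓ (r/t) := by
                  apply mul_le_mul_of_nonneg_right _ (hℓpos _ hrt0).le
                  apply mul_le_mul_of_nonneg_right _ (by positivity)
                  linarith
            · have hcl := hcompℓ (a / min t h) (r/t) hupos hrt0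
                (by linarith [hu12v, hrt0.le]) (by linarith [huv.le, hupos.le])
              calc ℓ (a / min t h) ≤ Mℓ * ℓ (r/t) := hcl
              _ = Mℓ * 1 * ℓ (r/t) := by ring
              _ ≤ Mℓ * (r/a) ^ m₁ * ℓ (r/t) := by
                  apply mul_le_mul_of_nonneg_right _ (hℓpos _ hrt0).le
                  exact mul_le_mul_of_nonneg_left hone_ra hMℓ.le
              _ ≤ (Nd + Mℓ) * (r/a) ^ m₁ * ℓ (r/t) := by
                  apply mul_le_mul_of_nonneg_right _ (hℓpos _ hrt0).le
                  apply mul_le_mul_of_nonneg_right _ (by positivity)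
                  linarith
          have hira : (r/a) ^ m₁ = (a/r) ^ (-m₁) := rpow_inv_ratio haz hr m₁
          refine ⟨DC, hDC0, by linarith, ?_⟩
          calc Φ₁ (a/h) * Φ₂ (t/h) * ℓ (a / min t h)
              ≤ ((N₁ * (12:ℝ) ^ |β₁-ε/2|) * (a/r) ^ (β₁-ε/2) * Φ₁ (r/Y))
                * (M₂ * Φ₂ (t/Y))
                * ((Nd + Mℓ) * (r/a) ^ m₁ * ℓ (r/t)) :=
              mul_le_mul3 hF1 hF2 hl1 (hΦ₁pos _ (div_pos haz hhpos)).le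
                (hΦ₂pos _ (div_pos hty hhpos)).le (hℓpos _ hupos).le
          _ = DC * ((a/r) ^ (β₁-ε/2) * (a/r) ^ (-m₁))
              * (Φ₁ (r/Y) * Φ₂ (t/Y) * ℓ (r/t)) := by rw [hDCdef, hira]; ring
          _ = DC * (a/r) ^ ((β₁-ε/2) + -m₁) * (Φ₁ (r/Y) * Φ₂ (t/Y) * ℓ (r/t)) := by
              rw [← Real.rpow_add har0]
          _ ≤ DC * (a/r) ^ (β₁ - ε) * (Φ₁ (r/Y) * Φ₂ (t/Y) * ℓ (r/t)) := by
              apply mul_le_mul_of_nonneg_right _ (le_of_lt (mul_pos (mul_pos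
                (hΦ₁pos _ (div_pos hr hYpos)) (hΦ₂pos _ (div_pos hty hYpos)))
                (hℓpos _ (div_pos hr hty))))
              apply mul_le_mul_of_nonneg_left _ hDC0.le
              exact Real.rpow_le_rpow_of_exponent_ge har0 har1 hexp₁
    obtain ⟨Dc, hDc0, hDcle, hprod⟩ := key
    have hhp : h ^ (-(n + 1 : ℝ) - α) ≤ κ * Y ^ (-(n + 1 : ℝ) - α) :=
      hpowc Y h hYpos hhpos hY12
    have hkA : (0:ℝ) ≤ Y ^ (-(n + 1 : ℝ) - α) * Φ₁ (min r t / Y) * Φ₂ (max r t / Y)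
        * ℓ (min r t / max r t) := by
      have := Real.rpow_nonneg hYpos.le (-(n + 1 : ℝ) - α)
      positivity
    calc B z y * h ^ (-(n + 1 : ℝ) - α)
        ≤ (CB * (Φ₁ (min a t / h) * Φ₂ (max a t / h) * ℓ (min a t / min (max a t) h)))
          * (κ * Y ^ (-(n + 1 : ℝ) - α)) := by
          apply mul_le_mul hBu hhp (Real.rpow_nonneg hhpos.le _) _
          positivity
    _ ≤ (CB * (Dc * (a/r) ^ (β₁ - ε)
          * (Φ₁ (min r t / Y) * Φ₂ (max r t / Y) * ℓ (min r t / max r t))))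
        * (κ * Y ^ (-(n + 1 : ℝ) - α)) := by
          apply mul_le_mul_of_nonneg_right _ (by positivity)
          exact mul_le_mul_of_nonneg_left hprod hCB0.le
    _ = ((CB * κ) * Dc) * ((a/r) ^ (β₁ - ε)
          * (Y ^ (-(n + 1 : ℝ) - α) * Φ₁ (min r t / Y) * Φ₂ (max r t / Y)
            * ℓ (min r t / max r t))) := by ring
    _ ≤ ((CB * κ) * (DA + DB + DC)) * ((a/r) ^ (β₁ - ε)
          * (Y ^ (-(n + 1 : ℝ) - α) * Φ₁ (min r t / Y) * Φ₂ (max r t / Y)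
            * ℓ (min r t / max r t))) := by
          apply mul_le_mul_of_nonneg_right _ (by positivity)
          exact mul_le_mul_of_nonneg_left hDcle (by positivity)
    _ = CB * κ * (DA + DB + DC) * (a/r) ^ (β₁ - ε)
          * (Y ^ (-(n + 1 : ℝ) - α) * Φ₁ (min r t / Y) * Φ₂ (max r t / Y)
            * ℓ (min r t / max r t)) := by ring
end
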